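/- arXiv:2107.12840 — 9 statements merged into one kernel-verified Lean document; each statement's English description precedes it below -/
import Mathlib

section
/- If f : B(0,a) → ℝ is smooth on the ball B(0,a) ⊂ ℝⁿ and vanishes to infinite order at the origin (i.e. lim_{x→0} |x|^{-N} f(x) = 0 for every natural number N), then every partial derivative D^μ f also vanishes to infinite order at the origin. -/
/-!
Induction on the order of the derivative. If `g` is flat and its derivative `g'` is
`K`-Lipschitz near `0`, Taylor's formula with step `d` in every unit direction gives
`‖g' x‖ ≤ 2 sup_{B(x,d)} ‖g‖ / d + K d`. Taking `d = ‖x‖ ^ (N + 2)` and bounding `g` on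
`B(x,d)` by flatness of order `2N + 2` yields `‖g' x‖ = O(‖x‖ ^ N)`. Smoothness supplies the
Lipschitz bound for the derivative of each iterated derivative.
-/

open Metric Filter Topology Asymptotics NNReal

def FlatAtZero {E F : Type*} [NormedAddCommGroup E] [NormedAddCommGroup F] (g : E → F) : Prop :=
  ∀ N : ℕ, g =o[𝓝[≠] 0] fun x => ‖x‖ ^ N

section

variable {E F : Type*} [NormedAddCommGroup E] [NormedAddCommGroup F]

theorem flatAtZero_iff_tendsto_div {g : E → ℝ} :
    FlatAtZero g ↔ ∀ N : ℕ, Tendsto (fun x => g x / ‖x‖ ^ N) (𝓝[≠] 0) (𝓝 0) := by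
  refine forall_congr' fun N => isLittleO_iff_tendsto' ?_
  filter_upwards [self_mem_nhdsWithin] with x hx hx0
  exact absurd hx0 (pow_ne_zero _ (norm_ne_zero_iff.2 hx))

theorem FlatAtZero.congr_norm {G : Type*} [NormedAddCommGroup G] {g : E → F} {h : E → G}
    (hg : FlatAtZero g) (hgh : ∀ x, ‖h x‖ = ‖g x‖) : FlatAtZero h := fun N =>
  ((hg N).norm_left.congr_left fun x => (hgh x).symm).of_norm_left

theorem flatAtZero_of_isBigO {g : E → F}
    (hg : ∀ N : ℕ, g =O[𝓝[≠] 0] fun x => ‖x‖ ^ N) : FlatAtZero g := fun N =>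
  (hg (N + 1)).trans_isLittleO <| (isLittleO_pow_pow (𝕜 := ℝ) N.lt_succ_self).comp_tendsto
    (tendsto_norm_zero.mono_left nhdsWithin_le_nhds)

variable [NormedSpace ℝ E] [NormedSpace ℝ F]

theorem norm_le_of_hasFDerivWithinAt_of_lipschitzOnWith {g : E → F} {g' : E → E →L[ℝ] F}
    {K : ℝ≥0} {x : E} {d B : ℝ} (hd : 0 < d)
    (hg : ∀ y ∈ closedBall x d, HasFDerivWithinAt g (g' y) (closedBall x d) y)
    (hK : LipschitzOnWith K g' (closedBall x d)) (hB : ∀ y ∈ closedBall x d, ‖g y‖ ≤ B) :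
    ‖g' x‖ ≤ 2 * B / d + K * d := by
  have hx : x ∈ closedBall x d := mem_closedBall_self hd.le
  have hB0 : 0 ≤ B := (norm_nonneg _).trans (hB x hx)
  refine ContinuousLinearMap.opNorm_le_of_unit_norm (by positivity) fun v hv => ?_
  have hy : x + d • v ∈ closedBall x d := by
    simp [norm_smul, hv, abs_of_pos hd]
  have taylor : ‖g (x + d • v) - g x - g' x (d • v)‖ ≤ K * d * d := by
    have := (convex_closedBall x d).norm_image_sub_le_of_norm_hasFDerivWithin_le' hg
      (fun u hu => hK.norm_sub_le_of_le hu hx (mem_closedBall_iff_norm.1 hu)) hx hy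
    simpa [norm_smul, hv, abs_of_pos hd] using this
  have hdv : d * ‖g' x v‖ ≤ 2 * B + K * d * d := by
    calc d * ‖g' x v‖ = ‖g' x (d • v)‖ := by simp [norm_smul, abs_of_pos hd]
      _ = ‖-(g (x + d • v) - g x - g' x (d • v)) + g (x + d • v) - g x‖ := by
        congr 1; abel
      _ ≤ ‖g (x + d • v) - g x - g' x (d • v)‖ + ‖g (x + d • v)‖ + ‖g x‖ :=
        (norm_sub_le_of_le (norm_add_le _ _) le_rfl).trans_eq (by rw [norm_neg])
      _ ≤ K * d * d + B + B := by gcongr <;> exact hB _ ‹_›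
      _ = 2 * B + K * d * d := by ring
  rw [div_add' _ _ _ hd.ne', le_div_iff₀ hd]
  linarith

theorem FlatAtZero.fderiv_of_lipschitzOnWith {g : E → F} {g' : E → E →L[ℝ] F} {K : ℝ≥0}
    {t : Set E} (hg : FlatAtZero g) (hderiv : ∀ᶠ x in 𝓝 0, HasFDerivAt g (g' x) x)
    (hK : LipschitzOnWith K g' t) (ht : t ∈ 𝓝 0) : FlatAtZero g' := by
  refine flatAtZero_of_isBigO fun N => ?_
  obtain ⟨C, hC0, hC⟩ := (hg (2 * N + 2)).isBigO.exists_pos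
  obtain ⟨r, hr, hnear⟩ := eventually_nhds_iff_ball.1
    ((eventually_nhdsWithin_iff.1 hC.bound).and (hderiv.and ht))
  refine .of_bound (2 ^ (2 * N + 3) * C + K) ?_
  filter_upwards [self_mem_nhdsWithin,
    nhdsWithin_le_nhds (ball_mem_nhds 0 (lt_min one_pos (half_pos hr)))] with x hx0 hx
  have hxpos : 0 < ‖x‖ := norm_pos_iff.2 hx0
  rw [mem_ball_zero_iff, lt_min_iff] at hx
  -- The step `d = ‖x‖ ^ (N + 2)` is tiny compared with `‖x‖`, so `closedBall x d` avoids `0`.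
  set d := ‖x‖ ^ (N + 2) with hd
  have hdx : d < ‖x‖ := by
    simpa using pow_lt_pow_right_of_lt_one₀ hxpos hx.1 (by omega : 1 < N + 2)
  have hball : ∀ y ∈ closedBall x d, y ≠ 0 ∧ ‖y‖ ≤ 2 * ‖x‖ ∧ y ∈ ball 0 r := by
    intro y hy
    rw [mem_closedBall_iff_norm] at hy
    have h₁ := norm_sub_norm_le x y
    have h₂ := norm_le_insert' y x
    refine ⟨norm_pos_iff.1 ?_, ?_, mem_ball_zero_iff.2 ?_⟩
    all_goals rw [norm_sub_rev] at h₁; linarith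
  have hbound := norm_le_of_hasFDerivWithinAt_of_lipschitzOnWith
    (B := C * (2 * ‖x‖) ^ (2 * N + 2)) (pow_pos hxpos _)
    (fun y hy => (hnear y (hball y hy).2.2).2.1.hasFDerivWithinAt)
    (hK.mono fun y hy => (hnear y (hball y hy).2.2).2.2) fun y hy => by
      obtain ⟨hy0, hy2, hyr⟩ := hball y hy
      refine ((hnear y hyr).1 hy0).trans ?_
      rw [norm_pow, norm_norm]
      gcongr
  have hx2 : ‖x‖ ^ 2 ≤ 1 := pow_le_one₀ hxpos.le hx.1.le
  calc ‖g' x‖ ≤ 2 * (C * (2 * ‖x‖) ^ (2 * N + 2)) / d + K * d := hbound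
    _ = 2 ^ (2 * N + 3) * C * ‖x‖ ^ N + K * (‖x‖ ^ N * ‖x‖ ^ 2) := by
      rw [hd]; field_simp; ring
    _ ≤ 2 ^ (2 * N + 3) * C * ‖x‖ ^ N + K * (‖x‖ ^ N * 1) := by gcongr
    _ = (2 ^ (2 * N + 3) * C + K) * ‖‖x‖ ^ N‖ := by rw [norm_pow, norm_norm]; ring

theorem flatAtZero_iteratedFDerivWithin {f : E → F} {s : Set E} (hs : IsOpen s)
    (h0 : (0 : E) ∈ s) (hf : ContDiffOn ℝ (⊤ : ℕ∞) f s) (hflat : FlatAtZero f) (m : ℕ) :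
    FlatAtZero (iteratedFDerivWithin ℝ m f s) := by
  induction m with
  | zero => exact hflat.congr_norm fun x => norm_iteratedFDerivWithin_zero
  | succ m ih =>
    have hderiv : ∀ᶠ x in 𝓝 0, HasFDerivAt (iteratedFDerivWithin ℝ m f s)
        (fderivWithin ℝ (iteratedFDerivWithin ℝ m f s) s x) x := by
      filter_upwards [hs.mem_nhds h0] with x hx
      have hdiff := hf.differentiableOn_iteratedFDerivWithin
        (ENat.natCast_lt_of_coe_top_le_withTop le_rfl m) hs.uniqueDiffOn
      exact (hdiff x hx).hasFDerivWithinAt.hasFDerivAt (hs.mem_nhds hx)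
    have hC1 : ContDiffAt ℝ 1 (fderivWithin ℝ (iteratedFDerivWithin ℝ m f s) s) 0 := by
      have hC2 := (hf 0 h0).iteratedFDerivWithin_right (m := 2) (i := m) hs.uniqueDiffOn
        (ENat.natCast_le_of_coe_top_le_withTop le_rfl _) h0
      exact (hC2.fderivWithin_right hs.uniqueDiffOn le_rfl h0).contDiffAt (hs.mem_nhds h0)
    obtain ⟨K, t, ht, hK⟩ := hC1.exists_lipschitzOnWith
    exact (ih.fderiv_of_lipschitzOnWith hderiv hK ht).congr_norm fun x =>
      norm_fderivWithin_iteratedFDerivWithin.symm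

end

/-- If `f` is smooth on the ball `B(0,a) ⊆ ℝⁿ` and vanishes to infinite order at the
origin, then every derivative of `f` also vanishes to infinite order at the origin. -/
theorem flat_smooth_derivatives_flat (n : ℕ) (a : ℝ) (ha : 0 < a)
    (f : EuclideanSpace ℝ (Fin n) → ℝ)
    (hf : ContDiffOn ℝ (⊤ : ℕ∞) f (ball 0 a))
    (hflat : ∀ N : ℕ,
      Tendsto (fun x => f x / ‖x‖ ^ N)
        (𝓝[ball (0 : EuclideanSpace ℝ (Fin n)) a \ {0}] 0) (𝓝 0)) :
    ∀ (m N : ℕ),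
      Tendsto (fun x => ‖iteratedFDerivWithin ℝ m f (ball 0 a) x‖ / ‖x‖ ^ N)
        (𝓝[ball (0 : EuclideanSpace ℝ (Fin n)) a \ {0}] 0) (𝓝 0) := by
  have h0 : (0 : EuclideanSpace ℝ (Fin n)) ∈ ball 0 a := mem_ball_self ha
  have hnhds : 𝓝[ball (0 : EuclideanSpace ℝ (Fin n)) a \ {0}] 0 = 𝓝[≠] 0 :=
    nhdsWithin_inter_of_mem (mem_nhdsWithin_of_mem_nhds (isOpen_ball.mem_nhds h0))
  rw [hnhds] at hflat ⊢
  intro m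
  have hflat_m := flatAtZero_iteratedFDerivWithin isOpen_ball h0 hf
    (flatAtZero_iff_tendsto_div.2 hflat) m
  exact flatAtZero_iff_tendsto_div.1 (hflat_m.congr_norm fun x => norm_norm _)
end

section
/- Suppose f : ℝ → ℝ satisfies f(x) ≥ 0 and |f''''(x)| ≤ 1 for all x ∈ ℝ. Then for every x, the negative part of the second derivative is controlled by the function value: -f''(x) ≤ (5/3) f(x)^{1/2}. -/
/-!
The even part `g t = f (x + t) + f (x - t)` is nonnegative, has `g 0 = 2 f x`, `g'' 0 = 2 f'' x`,
vanishing odd derivatives at `0`, and `|g''''| ≤ 2`. Taylor expansion to order four therefore gives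
`0 ≤ 2 f x + f'' x b² + b⁴ / 12` for every `b ≠ 0`, and choosing `b² = -6 f'' x` yields
`3 (f'' x)² ≤ 2 f x` whenever `f'' x < 0`, which is stronger than the claim.
-/

open Finset Nat

theorem exists_eq_taylor_sum_add_iteratedDeriv {f : ℝ → ℝ} {n : ℕ} (hf : ContDiff ℝ (n + 1) f)
    {x₀ x : ℝ} (hx : x₀ ≠ x) :
    ∃ ξ, f x = ∑ k ∈ range (n + 1), iteratedDeriv k f x₀ / k ! * (x - x₀) ^ k +
      iteratedDeriv (n + 1) f ξ * (x - x₀) ^ (n + 1) / (n + 1)! := by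
  obtain ⟨ξ, -, hξ⟩ := taylor_mean_remainder_lagrange_iteratedDeriv hx hf.contDiffOn
  have htaylor : taylorWithinEval f n (Set.uIcc x₀ x) x₀ x =
      ∑ k ∈ range (n + 1), iteratedDeriv k f x₀ / k ! * (x - x₀) ^ k := by
    rw [taylor_within_apply]
    refine sum_congr rfl fun k hk ↦ ?_
    have hk : (k : WithTop ℕ∞) ≤ n + 1 := by exact_mod_cast (mem_range.1 hk).le
    rw [iteratedDerivWithin_eq_iteratedDeriv (uniqueDiffOn_uIcc hx) (hf.of_le hk).contDiffAt
      Set.left_mem_uIcc, smul_eq_mul]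
    ring
  exact ⟨ξ, by rw [← hξ, htaylor]; ring⟩

theorem iteratedDeriv_comp_const_add_add_comp_const_sub {𝕜 F : Type*}
    [NontriviallyNormedField 𝕜] [NormedAddCommGroup F] [NormedSpace 𝕜 F] {f : 𝕜 → F} {n : ℕ}
    (hf : ContDiff 𝕜 n f) (x t : 𝕜) :
    iteratedDeriv n (fun s ↦ f (x + s) + f (x - s)) t =
      iteratedDeriv n f (x + t) + (-1 : 𝕜) ^ n • iteratedDeriv n f (x - t) := by
  have hplus : ContDiff 𝕜 n fun s ↦ f (x + s) := hf.comp (contDiff_const.add contDiff_id)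
  have hminus : ContDiff 𝕜 n fun s ↦ f (x - s) := hf.comp (contDiff_const.sub contDiff_id)
  rw [iteratedDeriv_fun_add hplus.contDiffAt hminus.contDiffAt, iteratedDeriv_comp_const_add,
    iteratedDeriv_comp_const_sub]

theorem le_five_thirds_mul_of_forall_mul_sq_le {a s : ℝ} (hs : 0 ≤ s)
    (h : ∀ b : ℝ, b ≠ 0 → a * b ^ 2 ≤ 2 * s ^ 2 + b ^ 4 / 12) : a ≤ 5 / 3 * s := by
  by_contra! ha
  have hb : √(6 * a) ^ 2 = 6 * a := Real.sq_sqrt (by linarith)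
  have := h √(6 * a) (Real.sqrt_pos.2 (by linarith)).ne'
  rw [show √(6 * a) ^ 4 = (√(6 * a) ^ 2) ^ 2 by ring, hb] at this
  nlinarith

theorem neg_iteratedDeriv_two_mul_sq_le {f : ℝ → ℝ} (hf : ContDiff ℝ 4 f) (h0 : ∀ x, 0 ≤ f x)
    (h4 : ∀ x, |iteratedDeriv 4 f x| ≤ 1) (x : ℝ) {b : ℝ} (hb : b ≠ 0) :
    -iteratedDeriv 2 f x * b ^ 2 ≤ 2 * f x + b ^ 4 / 12 := by
  set g : ℝ → ℝ := fun s ↦ f (x + s) + f (x - s)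
  have hg : ContDiff ℝ (3 + 1) g :=
    (hf.comp (contDiff_const.add contDiff_id)).add (hf.comp (contDiff_const.sub contDiff_id))
  have hdg : ∀ k ≤ 4, ∀ t, iteratedDeriv k g t =
      iteratedDeriv k f (x + t) + (-1) ^ k * iteratedDeriv k f (x - t) := fun k hk t ↦
    iteratedDeriv_comp_const_add_add_comp_const_sub (hf.of_le (by exact_mod_cast hk)) x t
  obtain ⟨ξ, hξ⟩ := exists_eq_taylor_sum_add_iteratedDeriv hg hb.symm
  have hrem : iteratedDeriv 4 g ξ ≤ 2 := by
    rw [hdg 4 le_rfl]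
    linarith [(abs_le.1 (h4 (x + ξ))).2, (abs_le.1 (h4 (x - ξ))).2]
  simp only [sum_range_succ, sum_range_zero] at hξ
  rw [hdg 0 (by norm_num), hdg 1 (by norm_num), hdg 2 (by norm_num), hdg 3 (by norm_num)] at hξ
  norm_num at hξ
  nlinarith [h0 (x + b), h0 (x - b), pow_nonneg (sq_nonneg b) 2]

/-- Fefferman–Phong: if `f ≥ 0` and `|f''''| ≤ 1` on `ℝ`, then the negative part of the
second derivative is controlled by the function value: `-f''(x) ≤ (5/3) f(x)^(1/2)`. -/
theorem neg_second_deriv_le (f : ℝ → ℝ) (hf : ContDiff ℝ 4 f)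
    (h0 : ∀ x, 0 ≤ f x) (h4 : ∀ x, |iteratedDeriv 4 f x| ≤ 1) :
    ∀ x : ℝ, -(iteratedDeriv 2 f x) ≤ (5 / 3) * f x ^ ((1 : ℝ) / 2) := by
  intro x
  rw [← Real.sqrt_eq_rpow]
  refine le_five_thirds_mul_of_forall_mul_sq_le (Real.sqrt_nonneg _) fun b hb ↦ ?_
  rw [Real.sq_sqrt (h0 x)]
  exact neg_iteratedDeriv_two_mul_sq_le hf h0 h4 x hb
end

section
/- Suppose f : ℝ → ℝ satisfies f(x) ≥ 0 and |f''''(x)| ≤ 1 for all x ∈ ℝ. Then |f'(x)| ≤ (8/3) f(x)^{3/4} + (8/3) f(x)^{1/2} |f''(x)|^{1/2} for all x ∈ ℝ. -/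
/-!
Taylor's formula with a fourth-order remainder bounds `0 ≤ f (x + t)` by a quartic in `t`;
the combinations `8 f(x ∓ h) + f(x ± 2h)` kill the `f'''(x)` term and give
`6 h |f'(x)| ≤ 9 f(x) + 6 h² |f''(x)| + h⁴` for every `h`. Writing `f(x) = a⁴` and
`|f''(x)| = b²`, the choice `h = a² / (a + b)` makes the right-hand side at most
`16 a⁴ = 6 h · (8/3) (a³ + a² b)`. Where `f(x) = 0`, `x` is a minimum of `f`, so `f'(x) = 0`.
-/

open Finset Nat

theorem abs_sub_sum_taylor_le {f : ℝ → ℝ} {n : ℕ} {M : ℝ} (hf : ContDiff ℝ (n + 1) f)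
    (hM : ∀ y, |iteratedDeriv (n + 1) f y| ≤ M) (x t : ℝ) :
    |f (x + t) - ∑ k ∈ range (n + 1), t ^ k / k ! * iteratedDeriv k f x| ≤
      M * |t| ^ (n + 1) / (n + 1)! := by
  rcases eq_or_ne t 0 with rfl | ht
  · simp [sum_range_succ']
  have hx : x ≠ x + t := fun h => ht (by linarith)
  obtain ⟨ξ, -, hξ⟩ := taylor_mean_remainder_lagrange_iteratedDeriv hx hf.contDiffOn
  have hcoeff : ∀ k ∈ range (n + 1),
      ((k ! : ℝ)⁻¹ * (x + t - x) ^ k) • iteratedDerivWithin k f (Set.uIcc x (x + t)) x =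
        t ^ k / k ! * iteratedDeriv k f x := by
    intro k hk
    rw [iteratedDerivWithin_eq_iteratedDeriv (uniqueDiffOn_uIcc hx) _ Set.left_mem_uIcc]
    · simp only [add_sub_cancel_left, smul_eq_mul]; ring
    · exact (hf.of_le (by exact_mod_cast (mem_range.mp hk).le)).contDiffAt
  rw [taylor_within_apply, sum_congr rfl hcoeff] at hξ
  rw [hξ, add_sub_cancel_left, abs_div, abs_mul, abs_pow,
    abs_of_pos (by positivity : (0 : ℝ) < (n + 1)!)]
  gcongr
  exact hM ξ

theorem le_taylor_cubic_add {f : ℝ → ℝ} {M : ℝ} (hf : ContDiff ℝ 4 f)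
    (hM : ∀ y, |iteratedDeriv 4 f y| ≤ M) (x t : ℝ) :
    f (x + t) ≤ f x + t * deriv f x + t ^ 2 / 2 * iteratedDeriv 2 f x +
      t ^ 3 / 6 * iteratedDeriv 3 f x + M * t ^ 4 / 24 := by
  have h := (abs_le.mp (abs_sub_sum_taylor_le (n := 3) hf hM x t)).2
  simp only [sum_range_succ, sum_range_zero, factorial, Even.pow_abs (by decide : Even 4)] at h
  norm_num [iteratedDeriv_one] at h
  linarith

theorem mul_abs_deriv_le_of_nonneg {f : ℝ → ℝ} {M : ℝ} (hf : ContDiff ℝ 4 f)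
    (h0 : ∀ x, 0 ≤ f x) (hM : ∀ y, |iteratedDeriv 4 f y| ≤ M) (x h : ℝ) :
    6 * h * |deriv f x| ≤ 9 * f x + 6 * h ^ 2 * |iteratedDeriv 2 f x| + M * h ^ 4 := by
  have hc := mul_le_mul_of_nonneg_left (le_abs_self (iteratedDeriv 2 f x)) (sq_nonneg h)
  have T := fun t => (h0 (x + t)).trans (le_taylor_cubic_add hf hM x t)
  rcases abs_cases (deriv f x) with ⟨hp, -⟩ | ⟨hp, -⟩ <;> rw [hp]
  · linear_combination 8 * T (-h) + T (2 * h) + 6 * hc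
  · linear_combination 8 * T h + T (-2 * h) + 6 * hc

theorem le_of_forall_pos_six_mul_le_quartic {p a b : ℝ} (ha : 0 < a) (hb : 0 ≤ b)
    (H : ∀ h, 0 < h → 6 * h * p ≤ 9 * a ^ 4 + 6 * h ^ 2 * b ^ 2 + h ^ 4) :
    p ≤ 8 / 3 * a ^ 3 + 8 / 3 * a ^ 2 * b := by
  set h := a ^ 2 / (a + b) with h_def
  have hh : 0 < h := by positivity
  have hhs : h * (a + b) = a ^ 2 := div_mul_cancel₀ _ (by positivity)
  have hha : h ≤ a := by rw [h_def, div_le_iff₀ (by positivity)]; nlinarith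
  have hhb : h * b ≤ a ^ 2 := by nlinarith
  refine le_of_mul_le_mul_left ?_ (by positivity : 0 < 6 * h)
  calc 6 * h * p ≤ 9 * a ^ 4 + 6 * (h * b) ^ 2 + h ^ 4 := by linarith [H h hh]
    _ ≤ 9 * a ^ 4 + 6 * (a ^ 2) ^ 2 + a ^ 4 := by gcongr
    _ = 6 * h * (8 / 3 * a ^ 3 + 8 / 3 * a ^ 2 * b) := by linear_combination (-16 * a ^ 2) * hhs

/-- Fefferman–Phong: if `f ≥ 0` and `|f''''| ≤ 1` on `ℝ`, then
`|f'(x)| ≤ (8/3) f(x)^(3/4) + (8/3) f(x)^(1/2) |f''(x)|^(1/2)`. -/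
theorem first_deriv_bound (f : ℝ → ℝ) (hf : ContDiff ℝ 4 f)
    (h0 : ∀ x, 0 ≤ f x) (h4 : ∀ x, |iteratedDeriv 4 f x| ≤ 1) :
    ∀ x : ℝ, |deriv f x| ≤
      (8 / 3) * f x ^ ((3 : ℝ) / 4) +
      (8 / 3) * f x ^ ((1 : ℝ) / 2) * |iteratedDeriv 2 f x| ^ ((1 : ℝ) / 2) := by
  intro x
  rcases (h0 x).eq_or_lt' with hfx | hfx
  · have hmin : IsLocalMin f x := Filter.Eventually.of_forall fun y => hfx ▸ h0 y
    rw [hmin.deriv_eq_zero, abs_zero]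
    positivity
  set a := f x ^ ((1 : ℝ) / 4)
  set b := |iteratedDeriv 2 f x| ^ ((1 : ℝ) / 2)
  have ha4 : a ^ 4 = f x := by rw [← Real.rpow_mul_natCast hfx.le]; norm_num
  have hb2 : b ^ 2 = |iteratedDeriv 2 f x| := by
    rw [← Real.rpow_mul_natCast (abs_nonneg _)]; norm_num
  have ha3 : f x ^ ((3 : ℝ) / 4) = a ^ 3 := by rw [← Real.rpow_mul_natCast hfx.le]; norm_num
  have ha2 : f x ^ ((1 : ℝ) / 2) = a ^ 2 := by rw [← Real.rpow_mul_natCast hfx.le]; norm_num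
  rw [ha3, ha2]
  refine le_of_forall_pos_six_mul_le_quartic (by positivity) (by positivity) fun h _ => ?_
  simpa [ha4, hb2] using mul_abs_deriv_le_of_nonneg hf h0 h4 x h
end

section
/- Suppose f : ℝ → ℝ satisfies f(x) ≥ 0 and |f''''(x)| ≤ 1 for all x ∈ ℝ. Then |f'''(x)| ≤ 8 f(x)^{1/4} + 8 |f''(x)|^{1/2} for all x ∈ ℝ. -/
/-!
Expanding `f(x ± t)` to third order, the remainders are at most `t⁴/24`, and `f(x ± t) ≥ 0`
bounds the odd part `f'(x) t + f'''(x) t³/6` by `f(x) + f''(x) t²/2 + t⁴/24`. Comparing the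
steps `t` and `2t` eliminates `f'(x)`, leaving `|f'''(x)| t³ ≤ 3 (f(x) + |f''(x)| t² + t⁴)`;
taking `t` just above `f(x)^{1/4} + |f''(x)|^{1/2}` gives the claim with constant `6`.
-/

open Finset Set

theorem taylorWithinEval_eq_sum_iteratedDeriv {f : ℝ → ℝ} {n : ℕ} {s : Set ℝ} {x₀ : ℝ}
    (hs : UniqueDiffOn ℝ s) (hx₀ : x₀ ∈ s) (hf : ContDiffAt ℝ n f x₀) (x : ℝ) :
    taylorWithinEval f n s x₀ x =
      ∑ k ∈ range (n + 1), ((k.factorial : ℝ)⁻¹ * (x - x₀) ^ k) • iteratedDeriv k f x₀ := by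
  rw [taylor_within_apply]
  refine sum_congr rfl fun k hk => ?_
  rw [iteratedDerivWithin_eq_iteratedDeriv hs (hf.of_le ?_) hx₀]
  exact_mod_cast Nat.lt_succ_iff.mp (mem_range.mp hk)

theorem abs_sub_taylor_three_le {f : ℝ → ℝ} {C : ℝ} (hf : ContDiff ℝ 4 f)
    (h4 : ∀ y, |iteratedDeriv 4 f y| ≤ C) (x t : ℝ) :
    |f (x + t) - (f x + iteratedDeriv 1 f x * t + iteratedDeriv 2 f x * t ^ 2 / 2
      + iteratedDeriv 3 f x * t ^ 3 / 6)| ≤ C * t ^ 4 / 24 := by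
  rcases eq_or_ne t 0 with rfl | ht
  · simp
  have hx : x ≠ x + t := fun h => ht (by linarith)
  obtain ⟨y, -, hy⟩ := taylor_mean_remainder_lagrange_iteratedDeriv (n := 3) hx hf.contDiffOn
  rw [taylorWithinEval_eq_sum_iteratedDeriv (uniqueDiffOn_uIcc hx) left_mem_uIcc
    (hf.of_le (by norm_num)).contDiffAt] at hy
  have hpoly : f (x + t) - (f x + iteratedDeriv 1 f x * t + iteratedDeriv 2 f x * t ^ 2 / 2
      + iteratedDeriv 3 f x * t ^ 3 / 6) = iteratedDeriv 4 f y * t ^ 4 / 24 := by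
    simp only [sum_range_succ, sum_range_zero, add_sub_cancel_left, smul_eq_mul] at hy
    norm_num [Nat.factorial] at hy
    rw [iteratedDeriv_one]
    linear_combination hy
  rw [hpoly, abs_div, abs_mul, abs_of_nonneg (by positivity : (0 : ℝ) ≤ t ^ 4),
    abs_of_pos (by norm_num : (0 : ℝ) < 24)]
  gcongr
  exact h4 y

section Nonneg

variable {f : ℝ → ℝ} (hf : ContDiff ℝ 4 f) (h0 : ∀ x, 0 ≤ f x)
  (h4 : ∀ x, |iteratedDeriv 4 f x| ≤ 1)
include hf h0 h4

theorem abs_odd_taylor_part_le (x t : ℝ) :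
    |iteratedDeriv 1 f x * t + iteratedDeriv 3 f x * t ^ 3 / 6|
      ≤ f x + iteratedDeriv 2 f x * t ^ 2 / 2 + t ^ 4 / 24 := by
  have hplus := abs_le.mp (abs_sub_taylor_three_le hf h4 x t)
  have hminus := abs_le.mp (abs_sub_taylor_three_le hf h4 x (-t))
  have := h0 (x + t)
  have := h0 (x + -t)
  rw [abs_le]
  constructor <;> linarith [hplus.1, hminus.1]

theorem abs_iteratedDeriv_three_mul_cube_le (x t : ℝ) :
    |iteratedDeriv 3 f x| * t ^ 3 ≤ 3 * (f x + |iteratedDeriv 2 f x| * t ^ 2 + t ^ 4) := by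
  -- `(2t)`-expansion minus twice the `t`-expansion isolates `f'''(x) t³`.
  have h1 := abs_le.mp (abs_odd_taylor_part_le hf h0 h4 x t)
  have h2 := abs_le.mp (abs_odd_taylor_part_le hf h0 h4 x (2 * t))
  have h2abs : iteratedDeriv 2 f x * t ^ 2 ≤ |iteratedDeriv 2 f x| * t ^ 2 := by
    gcongr; exact le_abs_self _
  have ht4 : 0 ≤ t ^ 4 := by positivity
  rcases abs_cases (iteratedDeriv 3 f x) with ⟨habs, -⟩ | ⟨habs, -⟩ <;> rw [habs] <;>
    linarith [h1.1, h1.2, h2.1, h2.2]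

end Nonneg

theorem le_six_mul_add_of_forall_mul_cube_le {c p q : ℝ} (hp : 0 ≤ p) (hq : 0 ≤ q)
    (h : ∀ t > 0, c * t ^ 3 ≤ 3 * (p ^ 4 + q ^ 2 * t ^ 2 + t ^ 4)) : c ≤ 6 * (p + q) := by
  refine le_of_forall_gt_imp_ge_of_dense fun s hs => ?_
  set t := s / 3 - (p + q) with ht
  have hpt : p ≤ t := by linarith
  have hqt : q ≤ t := by linarith
  have htpos : 0 < t := by linarith
  have hp4 : p ^ 4 ≤ p * t ^ 3 := by
    rw [pow_succ' p 3]; gcongr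
  have hq2 : q ^ 2 * t ^ 2 ≤ q * t ^ 3 := by
    calc q ^ 2 * t ^ 2 = q * t ^ 2 * q := by ring
      _ ≤ q * t ^ 2 * t := by gcongr
      _ = q * t ^ 3 := by ring
  have hst : 3 * (p ^ 4 + q ^ 2 * t ^ 2 + t ^ 4) ≤ s * t ^ 3 := by
    rw [show s = 3 * (p + q + t) by linarith]
    linarith
  exact le_of_mul_le_mul_right ((h t htpos).trans hst) (by positivity)

/-- Fefferman–Phong: if `f ≥ 0` and `|f''''| ≤ 1` on `ℝ`, then
`|f'''(x)| ≤ 8 f(x)^(1/4) + 8 |f''(x)|^(1/2)`. -/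
theorem third_deriv_bound (f : ℝ → ℝ) (hf : ContDiff ℝ 4 f)
    (h0 : ∀ x, 0 ≤ f x) (h4 : ∀ x, |iteratedDeriv 4 f x| ≤ 1) :
    ∀ x : ℝ, |iteratedDeriv 3 f x| ≤
      8 * f x ^ ((1 : ℝ) / 4) + 8 * |iteratedDeriv 2 f x| ^ ((1 : ℝ) / 2) := by
  intro x
  have hp : (f x ^ ((1 : ℝ) / 4)) ^ 4 = f x := by
    simpa using Real.rpow_inv_natCast_pow (h0 x) (n := 4) (by norm_num)
  have hq : (|iteratedDeriv 2 f x| ^ ((1 : ℝ) / 2)) ^ 2 = |iteratedDeriv 2 f x| := by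
    simpa using Real.rpow_inv_natCast_pow (abs_nonneg (iteratedDeriv 2 f x)) (n := 2) (by norm_num)
  have hsix := le_six_mul_add_of_forall_mul_cube_le (Real.rpow_nonneg (h0 x) _)
    (Real.rpow_nonneg (abs_nonneg _) _) fun t _ => by
      rw [hp, hq]; exact abs_iteratedDeriv_three_mul_cube_le hf h0 h4 x t
  linarith [Real.rpow_nonneg (h0 x) ((1 : ℝ) / 4),
    Real.rpow_nonneg (abs_nonneg (iteratedDeriv 2 f x)) ((1 : ℝ) / 2)]
end

section
/- Suppose f : ℝ → ℝ satisfies f(x) ≥ 0, f(x) ≤ 1, and |f''''(x)| ≤ 1 for all x ∈ ℝ. Then |f'(x)| ≤ 8 f(x)^{3/4} + (8/3) f(x)^{1/2} (f''(x)₊)^{1/2}, where f''(x)₊ = max(f''(x), 0) denotes the positive part of the second derivative. -/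
/-!
Since `f ≥ 0` and `|f⁗| ≤ 1`, Taylor's theorem at `x` shows that the quartic
`P(s) = f + f' s + f'' s²/2 + f''' s³/6 + s⁴/24` is nonnegative on all of `ℝ`. Combining its
values at `±t` and `±2t` eliminates the cubic coefficient and gives, for every `t > 0`,
`|f'| t ≤ (3/2) f + f''₊ t² + t⁴/6`. Choosing `t = f^{1/4}` when `f''₊ ≤ f^{1/2}` and
`t = f^{1/2} / f''₊^{1/2}` otherwise yields the bound. Where `f(x) = 0`, `x` is a minimum and
`f'(x) = 0`.
-/

open Set Nat

theorem taylorWithinEval_eq_sum_iteratedDeriv_s6 {f : ℝ → ℝ} {n : ℕ} (hf : ContDiff ℝ n f)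
    {x₀ x : ℝ} (hx : x₀ ≠ x) :
    taylorWithinEval f n (uIcc x₀ x) x₀ x =
      ∑ k ∈ Finset.range (n + 1), iteratedDeriv k f x₀ * (x - x₀) ^ k / k ! := by
  rw [taylor_within_apply]
  refine Finset.sum_congr rfl fun k hk => ?_
  have hkn : (k : WithTop ℕ∞) ≤ n := by
    exact_mod_cast Nat.lt_succ_iff.mp (Finset.mem_range.mp hk)
  rw [iteratedDerivWithin_eq_iteratedDeriv (uniqueDiffOn_uIcc hx) ((hf.of_le hkn).contDiffAt)
    left_mem_uIcc, smul_eq_mul]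
  ring

theorem exists_taylor_lagrange {f : ℝ → ℝ} {n : ℕ} (hf : ContDiff ℝ (n + 1) f) (x₀ x : ℝ) :
    ∃ ξ, f x = ∑ k ∈ Finset.range (n + 1), iteratedDeriv k f x₀ * (x - x₀) ^ k / k ! +
      iteratedDeriv (n + 1) f ξ * (x - x₀) ^ (n + 1) / (n + 1)! := by
  rcases eq_or_ne x₀ x with rfl | hx
  · refine ⟨x₀, ?_⟩
    rw [Finset.sum_range_succ']
    simp
  · obtain ⟨ξ, -, hξ⟩ := taylor_mean_remainder_lagrange_iteratedDeriv hx hf.contDiffOn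
    refine ⟨ξ, ?_⟩
    rw [← taylorWithinEval_eq_sum_iteratedDeriv_s6 (hf.of_le (by norm_cast; omega)) hx, ← hξ]
    ring

theorem abs_sub_taylor_cubic_le {f : ℝ → ℝ} {M : ℝ} (hf : ContDiff ℝ 4 f)
    (hM : ∀ y, |iteratedDeriv 4 f y| ≤ M) (x t : ℝ) :
    |f (x + t) - (f x + deriv f x * t + iteratedDeriv 2 f x * t ^ 2 / 2 +
      iteratedDeriv 3 f x * t ^ 3 / 6)| ≤ M * t ^ 4 / 24 := by
  obtain ⟨ξ, hξ⟩ := exists_taylor_lagrange (n := 3) hf x (x + t)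
  have hrem : |iteratedDeriv 4 f ξ * t ^ 4| ≤ M * t ^ 4 := by
    rw [abs_mul, abs_of_nonneg (Even.pow_nonneg (by decide) t)]
    exact mul_le_mul_of_nonneg_right (hM ξ) (Even.pow_nonneg (by decide) t)
  have hdiff : f (x + t) - (f x + deriv f x * t + iteratedDeriv 2 f x * t ^ 2 / 2 +
      iteratedDeriv 3 f x * t ^ 3 / 6) = iteratedDeriv 4 f ξ * t ^ 4 / 24 := by
    rw [hξ]
    norm_num [Finset.sum_range_succ, Nat.factorial]
  rw [hdiff, abs_div, abs_of_pos (by norm_num : (0 : ℝ) < 24)]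
  gcongr

theorem abs_mul_le_of_quartic_nonneg {a b c d : ℝ}
    (h : ∀ s, 0 ≤ a + b * s + c * s ^ 2 / 2 + d * s ^ 3 / 6 + s ^ 4 / 24) (t : ℝ) :
    |b * t| ≤ 3 / 2 * a + c * t ^ 2 + t ^ 4 / 6 := by
  -- The odd part `Q(s) = b s + d s³/6` satisfies `6 b t = 8 Q(t) - Q(2t)`.
  have h₁ := h t
  have h₂ := h (-t)
  have h₃ := h (2 * t)
  have h₄ := h (-(2 * t))
  rw [abs_le]
  constructor <;> linarith

theorem le_of_forall_mul_le_quartic {u v B : ℝ} (hu : 0 < u) (hv : 0 ≤ v)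
    (h : ∀ t > 0, B * t ≤ 3 / 2 * u ^ 4 + v ^ 2 * t ^ 2 + t ^ 4 / 6) :
    B ≤ 8 / 3 * u ^ 3 + 8 / 3 * u ^ 2 * v := by
  rcases le_or_gt v u with hvu | huv
  · have hB : B * u ≤ 8 / 3 * u ^ 3 * u := by
      have hu₄ := h u hu
      have hv₂ : v ^ 2 * u ^ 2 ≤ u ^ 2 * u ^ 2 := by gcongr
      linarith
    have hB₃ := le_of_mul_le_mul_right hB hu
    nlinarith [sq_nonneg u]
  · have hv₀ : 0 < v := hu.trans huv
    have ht : 0 < u ^ 2 / v := by positivity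
    have hB : B * (u ^ 2 / v) ≤ 8 / 3 * u ^ 2 * v * (u ^ 2 / v) := by
      have hut := h _ ht
      have hquart : (u ^ 2 / v) ^ 4 ≤ u ^ 4 := by
        rw [div_pow, div_le_iff₀ (by positivity)]
        have : u ^ 4 ≤ v ^ 4 := by gcongr
        nlinarith [pow_pos hu 4]
      have hsq : v ^ 2 * (u ^ 2 / v) ^ 2 = u ^ 4 := by field_simp
      have hrhs : 8 / 3 * u ^ 2 * v * (u ^ 2 / v) = 8 / 3 * u ^ 4 := by field_simp
      rw [hrhs]
      linarith
    have hB₂ := le_of_mul_le_mul_right hB ht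
    nlinarith [pow_pos hu 3]

theorem le_of_forall_mul_le_rpow {a m B : ℝ} (ha : 0 < a) (hm : 0 ≤ m)
    (h : ∀ t > 0, B * t ≤ 3 / 2 * a + m * t ^ 2 + t ^ 4 / 6) :
    B ≤ 8 / 3 * a ^ ((3 : ℝ) / 4) + 8 / 3 * a ^ ((1 : ℝ) / 2) * m ^ ((1 : ℝ) / 2) := by
  have ha₄ : a = (a ^ ((1 : ℝ) / 4)) ^ 4 := by rw [← Real.rpow_mul_natCast ha.le]; norm_num
  have hm₂ : m = (m ^ ((1 : ℝ) / 2)) ^ 2 := by rw [← Real.rpow_mul_natCast hm]; norm_num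
  have ha₃ : a ^ ((3 : ℝ) / 4) = (a ^ ((1 : ℝ) / 4)) ^ 3 := by
    rw [← Real.rpow_mul_natCast ha.le]; norm_num
  have ha₂ : a ^ ((1 : ℝ) / 2) = (a ^ ((1 : ℝ) / 4)) ^ 2 := by
    rw [← Real.rpow_mul_natCast ha.le]; norm_num
  rw [ha₃, ha₂]
  refine le_of_forall_mul_le_quartic (by positivity) (by positivity) fun t ht => ?_
  rw [← ha₄, ← hm₂]
  exact h t ht

theorem first_deriv_bound_pos_part_general (f : ℝ → ℝ) (hf : ContDiff ℝ 4 f)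
    (h0 : ∀ x, 0 ≤ f x) (h4 : ∀ x, |iteratedDeriv 4 f x| ≤ 1) :
    ∀ x : ℝ, |deriv f x| ≤
      8 * f x ^ ((3 : ℝ) / 4) +
      (8 / 3) * f x ^ ((1 : ℝ) / 2) * (max (iteratedDeriv 2 f x) 0) ^ ((1 : ℝ) / 2) := by
  intro x
  rcases (h0 x).eq_or_lt with hzero | hpos
  · have hmin : IsLocalMin f x := Filter.Eventually.of_forall fun y => hzero ▸ h0 y
    rw [hmin.deriv_eq_zero, abs_zero]
    positivity
  have hquartic : ∀ s, 0 ≤ f x + deriv f x * s + iteratedDeriv 2 f x * s ^ 2 / 2 +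
      iteratedDeriv 3 f x * s ^ 3 / 6 + s ^ 4 / 24 := fun s => by
    have := (abs_le.mp (abs_sub_taylor_cubic_le hf h4 x s)).2
    linarith [h0 (x + s)]
  have hlinear : ∀ t > 0, |deriv f x| * t ≤
      3 / 2 * f x + max (iteratedDeriv 2 f x) 0 * t ^ 2 + t ^ 4 / 6 := fun t ht => by
    have := abs_mul_le_of_quartic_nonneg hquartic t
    rw [abs_mul, abs_of_pos ht] at this
    have := mul_le_mul_of_nonneg_right (le_max_left (iteratedDeriv 2 f x) 0) (sq_nonneg t)
    linarith
  have hbound := le_of_forall_mul_le_rpow hpos (le_max_right _ _) hlinear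
  have : 0 ≤ f x ^ ((3 : ℝ) / 4) := by positivity
  linarith

/-- If `0 ≤ f ≤ 1` and `|f''''| ≤ 1` on `ℝ`, then
`|f'(x)| ≤ 8 f(x)^(3/4) + (8/3) f(x)^(1/2) (f''(x)₊)^(1/2)`, where `(·)₊` is the
positive part. -/
theorem first_deriv_bound_pos_part (f : ℝ → ℝ) (hf : ContDiff ℝ 4 f)
    (h0 : ∀ x, 0 ≤ f x) (h1 : ∀ x, f x ≤ 1) (h4 : ∀ x, |iteratedDeriv 4 f x| ≤ 1) :
    ∀ x : ℝ, |deriv f x| ≤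
      8 * f x ^ ((3 : ℝ) / 4) +
      (8 / 3) * f x ^ ((1 : ℝ) / 2) * (max (iteratedDeriv 2 f x) 0) ^ ((1 : ℝ) / 2) :=
  first_deriv_bound_pos_part_general f hf h0 h4
end

section
/- For each pair of integers k ≥ m ≥ 1 there is a constant C_{k,m} > 0 such that for any interval I of length ℓ(I) and any C^{k-1,1} function f on I, one has max_{z∈I} |f^{(m)}(z)| ≤ C_{k,m} [ ℓ(I)^{-m} M + M^{1-m/k} (max_{t∈I} |f^{(k)}(t)|)^{m/k} ], where M = max_{t₁,t₂∈I} |f(t₁) - f(t₂) - (t₁-t₂)f'(t₂) - ... - ((t₁-t₂)^{m-1}/(m-1)!) f^{(m-1)}(t₂)| is the maximal (m-1)-st order Taylor remainder over pairs of points in I. -/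
/-!
Subtracting from `f` its Taylor polynomial of order `m - 1` at `a` leaves a function `g` with
`|g| ≤ M`, with the same derivatives as `f` in orders `m, …, k - 1`. For such `g` and every step
`h ≤ ℓ(I)/C` one has the Landau–Kolmogorov bound `|g^{(i)}| ≤ C (M h^{-i} + K h^{k-i})`, proved by
induction on `k`: the mean value theorem at a step comparable to `h` bounds the new top
derivative by a quantity containing only half of its own maximum. The step
`h = min (ℓ(I)/C) ((M/K)^{1/k})` balances the two terms. For `m = k` the bound is just
`|f^{(k)}| ≤ K`.
-/

open Set Filter Topology
open scoped NNReal

theorem LipschitzOnWith.norm_derivWithin_le {𝕜 F : Type*} [NontriviallyNormedField 𝕜]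
    [NormedAddCommGroup F] [NormedSpace 𝕜 F] {f : 𝕜 → F} {s : Set 𝕜} {x : 𝕜} {K : ℝ≥0}
    (hf : LipschitzOnWith K f s) (hx : x ∈ s) : ‖derivWithin f s x‖ ≤ K := by
  by_cases hd : DifferentiableWithinAt 𝕜 f s x; swap
  · simp [derivWithin_zero_of_not_differentiableWithinAt hd]
  by_cases hacc : AccPt x (𝓟 s); swap
  · simp [derivWithin_zero_of_not_accPt hacc]
  have : (𝓝[s \ {x}] x).NeBot := accPt_principal_iff_nhdsWithin.mp hacc
  refine le_of_tendsto (hasDerivWithinAt_iff_tendsto_slope.mp hd.hasDerivWithinAt).norm ?_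
  filter_upwards [self_mem_nhdsWithin] with y ⟨hys, hyx⟩
  have hyx : y - x ≠ 0 := sub_ne_zero.2 (by simpa using hyx)
  rw [slope, vsub_eq_sub, norm_smul, norm_inv, inv_mul_le_iff₀ (norm_pos_iff.2 hyx), mul_comm]
  exact hf.norm_sub_le hys hx

theorem abs_derivWithin_le_of_abs_le_of_lipschitzOnWith {a b A h : ℝ} {B : ℝ≥0} {u : ℝ → ℝ}
    (hu : DifferentiableOn ℝ u (Icc a b)) (hA : ∀ t ∈ Icc a b, |u t| ≤ A)
    (hB : LipschitzOnWith B (derivWithin u (Icc a b)) (Icc a b))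
    (hh : 0 < h) (hhab : 2 * h ≤ b - a) {z : ℝ} (hz : z ∈ Icc a b) :
    |derivWithin u (Icc a b) z| ≤ 2 * A / h + B * h := by
  set d := derivWithin u (Icc a b) z
  obtain ⟨w, hw, hwz⟩ : ∃ w ∈ Icc a b, |w - z| = h := by
    rcases le_or_gt (z + h) b with hzh | hzh
    · exact ⟨z + h, ⟨by linarith [hz.1], hzh⟩, by simp [abs_of_pos hh]⟩
    · exact ⟨z - h, ⟨by linarith [hz.2], by linarith [hz.2]⟩, by simp [abs_of_pos hh]⟩
  have hzw : uIcc z w ⊆ Icc a b := uIcc_subset_Icc hz hw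
  have hmvt : |u w - u z - (w - z) * d| ≤ B * h * h := by
    have := (convex_uIcc z w).norm_image_sub_le_of_norm_hasDerivWithin_le
      (f := fun t => u t - t * d) (f' := fun t => derivWithin u (Icc a b) t - d)
      (fun t ht => ((hu t (hzw ht)).hasDerivWithinAt.mono hzw).sub
        (hasDerivAt_mul_const d).hasDerivWithinAt)
      (fun t ht => by
        calc ‖derivWithin u (Icc a b) t - d‖ ≤ B * |t - z| := by
              simpa [Real.dist_eq] using hB.dist_le_mul t (hzw ht) z hz
          _ ≤ B * h := by gcongr; exact hwz ▸ abs_sub_left_of_mem_uIcc ht)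
      left_mem_uIcc right_mem_uIcc
    rw [Real.norm_eq_abs, Real.norm_eq_abs, hwz] at this
    convert this using 2
    ring
  have hh_mul : h * |d| ≤ 2 * A + B * h * h :=
    calc h * |d| = |(u w - u z) - (u w - u z - (w - z) * d)| := by
          rw [← hwz, ← abs_mul]; ring_nf
      _ ≤ |u w| + |u z| + |u w - u z - (w - z) * d| := by
          linarith [abs_sub (u w - u z) (u w - u z - (w - z) * d), abs_sub (u w) (u z)]
      _ ≤ 2 * A + B * h * h := by linarith [hA w hw, hA z hz]
  rw [div_add' _ _ _ hh.ne', le_div_iff₀ hh]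
  linarith

theorem lipschitzOnWith_iteratedDerivWithin_of_abs_le {a b : ℝ} (hab : a < b) {u : ℝ → ℝ}
    {n : ℕ} (hu : ContDiffOn ℝ ((n + 1 : ℕ) : ℕ∞) u (Icc a b)) {L : ℝ≥0}
    (hL : ∀ t ∈ Icc a b, |iteratedDerivWithin (n + 1) u (Icc a b) t| ≤ L) :
    LipschitzOnWith L (iteratedDerivWithin n u (Icc a b)) (Icc a b) := by
  have hdiff : DifferentiableOn ℝ (iteratedDerivWithin n u (Icc a b)) (Icc a b) :=
    hu.differentiableOn_iteratedDerivWithin (by exact_mod_cast n.lt_succ_self)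
      (uniqueDiffOn_Icc hab)
  refine (convex_Icc a b).lipschitzOnWith_of_nnnorm_hasDerivWithin_le (fun t ht => ?_)
    (fun t ht => hL t ht)
  rw [iteratedDerivWithin_succ]
  exact (hdiff t ht).hasDerivWithinAt

def IsLandauKolmogorovConstant (n : ℕ) (C : ℝ) : Prop :=
  ∀ a b : ℝ, a < b → ∀ u : ℝ → ℝ, ContDiffOn ℝ (n : ℕ∞) u (Icc a b) →
    ∀ (A : ℝ) (B : ℝ≥0), (∀ t ∈ Icc a b, |u t| ≤ A) →
    LipschitzOnWith B (iteratedDerivWithin n u (Icc a b)) (Icc a b) →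
    ∀ h : ℝ, 0 < h → C * h ≤ b - a → ∀ i ≤ n, ∀ z ∈ Icc a b,
      |iteratedDerivWithin i u (Icc a b) z| ≤ C * (A / h ^ i + B * h ^ (n + 1 - i))

theorem isLandauKolmogorovConstant_zero : IsLandauKolmogorovConstant 0 1 := by
  intro a b _ u _ A B hA _ h hh _ i hi z hz
  obtain rfl : i = 0 := Nat.le_zero.mp hi
  simpa using (hA z hz).trans (le_add_of_nonneg_right (by positivity))

namespace IsLandauKolmogorovConstant

variable {n : ℕ} {C : ℝ}

theorem abs_iteratedDerivWithin_succ_le (hC : IsLandauKolmogorovConstant n C) (hC0 : 0 < C)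
    {a b : ℝ} (hab : a < b) {u : ℝ → ℝ} (hu : ContDiffOn ℝ ((n + 1 : ℕ) : ℕ∞) u (Icc a b))
    {A : ℝ} (hA : ∀ t ∈ Icc a b, |u t| ≤ A) {B : ℝ≥0}
    (hB : LipschitzOnWith B (iteratedDerivWithin (n + 1) u (Icc a b)) (Icc a b))
    {h : ℝ} (hh : 0 < h) (hCh : 8 * C * h ≤ b - a) {t : ℝ} (ht : t ∈ Icc a b) :
    |iteratedDerivWithin (n + 1) u (Icc a b) t| ≤ A / h ^ (n + 1) + 8 * C * B * h := by
  set I := Icc a b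
  obtain ⟨x₀, hx₀, hmax⟩ := isCompact_Icc.exists_isMaxOn (nonempty_Icc.2 hab.le)
    (hu.continuousOn_iteratedDerivWithin le_rfl (uniqueDiffOn_Icc hab)).norm
  set S : ℝ≥0 := ‖iteratedDerivWithin (n + 1) u I x₀‖₊
  have hS : ∀ y ∈ I, |iteratedDerivWithin (n + 1) u I y| ≤ S := fun y hy => hmax hy
  have hlower : ∀ y ∈ I, |iteratedDerivWithin n u I y| ≤ C * (A / h ^ n + S * h) := by
    intro y hy
    simpa using hC a b hab u hu.of_succ A S hA
      (lipschitzOnWith_iteratedDerivWithin_of_abs_le hab hu hS) h hh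
      (by nlinarith) n le_rfl y hy
  -- the mean value bound at step `4 C h` costs only half of the maximum `S` of `|u^{(n+1)}|`
  have hhalf : ∀ y ∈ I, |iteratedDerivWithin (n + 1) u I y| ≤
      (A / h ^ (n + 1) + S + 8 * C * B * h) / 2 := by
    intro y hy
    have := abs_derivWithin_le_of_abs_le_of_lipschitzOnWith
      (hu.differentiableOn_iteratedDerivWithin (by exact_mod_cast n.lt_succ_self)
        (uniqueDiffOn_Icc hab)) hlower
      (by rwa [← iteratedDerivWithin_succ]) (by positivity : 0 < 4 * C * h) (by linarith) hy
    rw [← iteratedDerivWithin_succ] at this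
    convert this using 1
    field_simp
    ring
  have hSle : (S : ℝ) ≤ A / h ^ (n + 1) + 8 * C * B * h := by
    have := hhalf x₀ hx₀
    rw [← Real.norm_eq_abs, ← coe_nnnorm] at this
    linarith
  exact (hS t ht).trans hSle

theorem succ (hC : IsLandauKolmogorovConstant n C) (hC1 : 1 ≤ C) :
    IsLandauKolmogorovConstant (n + 1) (10 * C ^ 2) := by
  intro a b hab u hu A B hA hB h hh hCh i hi z hz
  have hA0 : 0 ≤ A := (abs_nonneg _).trans (hA a (left_mem_Icc.2 hab.le))
  have hC2 : C ≤ C ^ 2 := by nlinarith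
  set T := A / h ^ (n + 1) + 8 * C * B * h
  have hT : ∀ t ∈ Icc a b, |iteratedDerivWithin (n + 1) u (Icc a b) t| ≤ T := fun t ht =>
    hC.abs_iteratedDerivWithin_succ_le (by linarith) hab hu hA hB hh (by nlinarith) ht
  rcases hi.lt_or_eq with hi | rfl
  · obtain ⟨d, rfl⟩ : ∃ d, n = i + d := ⟨n - i, by omega⟩
    have hlip := lipschitzOnWith_iteratedDerivWithin_of_abs_le hab hu
      (L := T.toNNReal) fun t ht => (hT t ht).trans (Real.le_coe_toNNReal T)
    have := hC a b hab u hu.of_succ A T.toNNReal hA hlip h hh (by nlinarith) i (by omega) z hz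
    rw [Real.coe_toNNReal T (by positivity), show i + d + 1 - i = d + 1 by omega] at this
    rw [show i + d + 1 + 1 - i = d + 2 by omega]
    have hX : 0 ≤ A / h ^ i := by positivity
    have hY : 0 ≤ B * h ^ (d + 2) := by positivity
    calc |iteratedDerivWithin i u (Icc a b) z| ≤ C * (A / h ^ i + T * h ^ (d + 1)) := this
      _ = C * (2 * (A / h ^ i) + 8 * C * (B * h ^ (d + 2))) := by
          simp only [T]; field_simp; ring
      _ ≤ 10 * C ^ 2 * (A / h ^ i + B * h ^ (d + 2)) := by
          nlinarith [mul_le_mul_of_nonneg_right hC2 hX]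
  · rw [show n + 1 + 1 - (n + 1) = 1 by omega, pow_one]
    have hX : 0 ≤ A / h ^ (n + 1) := by positivity
    have hY : 0 ≤ (B : ℝ) * h := by positivity
    calc |iteratedDerivWithin (n + 1) u (Icc a b) z| ≤ T := hT z hz
      _ ≤ 10 * C ^ 2 * (A / h ^ (n + 1) + B * h) := by
          simp only [T]
          nlinarith [mul_le_mul_of_nonneg_right (hC1.trans hC2) hX,
            mul_le_mul_of_nonneg_right hC2 hY]

end IsLandauKolmogorovConstant

theorem exists_isLandauKolmogorovConstant (n : ℕ) :
    ∃ C, 1 ≤ C ∧ IsLandauKolmogorovConstant n C := by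
  induction n with
  | zero => exact ⟨1, le_rfl, isLandauKolmogorovConstant_zero⟩
  | succ n ih =>
    obtain ⟨C, hC1, hC⟩ := ih
    exact ⟨10 * C ^ 2, by nlinarith, hC.succ hC1⟩

theorem iteratedDeriv_sum_mul_sub_pow_eq_zero {𝕜 : Type*} [NontriviallyNormedField 𝕜]
    (c : ℕ → 𝕜) (x₀ : 𝕜) {m j : ℕ} (hmj : m ≤ j) :
    iteratedDeriv j (fun x => ∑ i ∈ Finset.range m, c i * (x - x₀) ^ i) = 0 := by
  ext x
  rw [iteratedDeriv_fun_sum fun i _ => by fun_prop]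
  refine Finset.sum_eq_zero fun i hi => ?_
  rw [iteratedDeriv_const_mul_field, iteratedDeriv_comp_sub_const j (· ^ i)]
  dsimp only
  rw [iteratedDeriv_pow, Nat.descFactorial_eq_zero_iff_lt.2 (by simp at hi; omega)]
  simp

theorem iteratedDerivWithin_sub_sum_mul_sub_pow {𝕜 : Type*} [NontriviallyNormedField 𝕜]
    {s : Set 𝕜} (hs : UniqueDiffOn 𝕜 s) {f : 𝕜 → 𝕜} {n j m : ℕ} (hf : ContDiffOn 𝕜 n f s)
    (hjn : j ≤ n) (hmj : m ≤ j) (c : ℕ → 𝕜) (x₀ : 𝕜) {x : 𝕜} (hx : x ∈ s) :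
    iteratedDerivWithin j (fun y => f y - ∑ i ∈ Finset.range m, c i * (y - x₀) ^ i) s x =
      iteratedDerivWithin j f s x := by
  have hP : ContDiff 𝕜 j fun y => ∑ i ∈ Finset.range m, c i * (y - x₀) ^ i := by fun_prop
  change iteratedDerivWithin j (f - fun y => _) s x = _
  rw [iteratedDerivWithin_sub hx hs ((hf.of_le (by exact_mod_cast hjn)).contDiffWithinAt hx)
    hP.contDiffWithinAt, iteratedDerivWithin_eq_iteratedDeriv hs hP.contDiffAt hx,
    iteratedDeriv_sum_mul_sub_pow_eq_zero c x₀ hmj, Pi.zero_apply, sub_zero]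

theorem IsLandauKolmogorovConstant.abs_iteratedDerivWithin_le_of_taylor_remainder_le
    {k m : ℕ} {C : ℝ} (hC : IsLandauKolmogorovConstant (k - 1) C) (hmk : m < k) {a b : ℝ}
    (hab : a < b) {f : ℝ → ℝ} (hf : ContDiffOn ℝ ((k - 1 : ℕ) : ℕ∞) f (Icc a b)) {M : ℝ}
    {K : ℝ≥0} (hK : LipschitzOnWith K (iteratedDerivWithin (k - 1) f (Icc a b)) (Icc a b))
    (hM : ∀ t ∈ Icc a b, |f t - ∑ j ∈ Finset.range m,
      (t - a) ^ j / j.factorial * iteratedDerivWithin j f (Icc a b) a| ≤ M)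
    {h : ℝ} (hh : 0 < h) (hCh : C * h ≤ b - a) {z : ℝ} (hz : z ∈ Icc a b) :
    |iteratedDerivWithin m f (Icc a b) z| ≤ C * (M / h ^ m + K * h ^ (k - m)) := by
  set g := fun t => f t - ∑ j ∈ Finset.range m,
    iteratedDerivWithin j f (Icc a b) a / j.factorial * (t - a) ^ j
  have hg : ∀ j, m ≤ j → j ≤ k - 1 → ∀ t ∈ Icc a b,
      iteratedDerivWithin j g (Icc a b) t = iteratedDerivWithin j f (Icc a b) t :=
    fun j hmj hjk t ht =>
      iteratedDerivWithin_sub_sum_mul_sub_pow (uniqueDiffOn_Icc hab) hf hjk hmj _ a ht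
  have hgM : ∀ t ∈ Icc a b, |g t| ≤ M := fun t ht => by
    convert hM t ht using 4
    ring
  have hgK : LipschitzOnWith K (iteratedDerivWithin (k - 1) g (Icc a b)) (Icc a b) :=
    fun x hx y hy => by
      simpa only [hg (k - 1) (by omega) le_rfl x hx, hg (k - 1) (by omega) le_rfl y hy]
        using hK hx hy
  have := hC a b hab g (hf.sub (by fun_prop)) M K hgM hgK h hh hCh m (by omega) z hz
  rwa [hg m le_rfl (by omega) z hz, show k - 1 + 1 - m = k - m by omega] at this

theorem le_two_mul_of_forall_le_div_pow_add_mul_pow {X M K h₀ : ℝ} {m k : ℕ} (hmk : m < k)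
    (hM : 0 ≤ M) (hK : 0 ≤ K) (hh₀ : 0 < h₀)
    (H : ∀ h, 0 < h → h ≤ h₀ → X ≤ M / h ^ m + K * h ^ (k - m)) :
    X ≤ 2 * (M / h₀ ^ m + M ^ (1 - (m : ℝ) / k) * K ^ ((m : ℝ) / k)) := by
  have hP : 0 ≤ M / h₀ ^ m := by positivity
  have hQ : 0 ≤ M ^ (1 - (m : ℝ) / k) * K ^ ((m : ℝ) / k) := by positivity
  rcases le_or_gt (K * h₀ ^ k) M with hMbig | hMsmall
  · have : K * h₀ ^ (k - m) ≤ M / h₀ ^ m := by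
      rwa [le_div_iff₀ (by positivity), mul_assoc, ← pow_add, Nat.sub_add_cancel hmk.le]
    linarith [H h₀ hh₀ le_rfl]
  have hK0 : 0 < K := pos_of_mul_pos_left (hM.trans_lt hMsmall) (by positivity)
  rcases hM.eq_or_lt with rfl | hM0
  · -- for `M = 0` the step `h` can be taken arbitrarily small
    have hlim : Tendsto (fun h : ℝ => K * h ^ (k - m)) (𝓝[>] 0) (𝓝 0) :=
      ((by fun_prop : Continuous fun h : ℝ => K * h ^ (k - m)).tendsto' 0 0
        (by simp [Nat.sub_ne_zero_of_lt hmk])).mono_left nhdsWithin_le_nhds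
    have : X ≤ 0 := ge_of_tendsto hlim <| by
      filter_upwards [Ioc_mem_nhdsGT hh₀] with h ⟨hh, hhh₀⟩
      simpa using H h hh hhh₀
    linarith
  · have hk : (k : ℝ) ≠ 0 := by exact_mod_cast (Nat.zero_lt_of_lt hmk).ne'
    set θ := (M / K) ^ (k⁻¹ : ℝ)
    have hθ : 0 < θ := by positivity
    have hθh₀ : θ ≤ h₀ := by
      calc θ ≤ (h₀ ^ k) ^ (k⁻¹ : ℝ) :=
            Real.rpow_le_rpow (by positivity) (by rw [div_le_iff₀ hK0]; linarith) (by positivity)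
        _ = h₀ := Real.pow_rpow_inv_natCast hh₀.le (by exact_mod_cast hk)
    have hθpow : ∀ j : ℕ, θ ^ j = M ^ ((j : ℝ) / k) / K ^ ((j : ℝ) / k) := by
      intro j
      rw [← Real.rpow_natCast, ← Real.rpow_mul (by positivity), inv_mul_eq_div,
        Real.div_rpow hM hK]
    have hMr := Real.rpow_sub hM0 1 ((m : ℝ) / k)
    have hKr := Real.rpow_sub hK0 1 ((m : ℝ) / k)
    rw [Real.rpow_one] at hMr hKr
    have hfirst : M / θ ^ m = M ^ (1 - (m : ℝ) / k) * K ^ ((m : ℝ) / k) := by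
      rw [hθpow, hMr]
      field_simp
    have hsecond : K * θ ^ (k - m) = M ^ (1 - (m : ℝ) / k) * K ^ ((m : ℝ) / k) := by
      rw [hθpow, Nat.cast_sub hmk.le, sub_div, div_self hk, hMr, hKr]
      field_simp
    linarith [H θ hθ hθh₀]

/-- One-dimensional Landau–Kolmogorov type interpolation with Taylor remainder data:
for `k ≥ m ≥ 1` there is a constant `C > 0` so that for every interval `[a,b]` and
every `C^{k-1,1}` function `f` on `[a,b]` (i.e. `f` is `C^{k-1}` with `f^{(k-1)}`
`K`-Lipschitz on `[a,b]`), if the `(m-1)`-st order Taylor remainders over pairs of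
points of `[a,b]` are bounded by `M`, then
`|f^{(m)}(z)| ≤ C (M/(b-a)^m + M^{1-m/k} K^{m/k})` for all `z ∈ [a,b]`. -/
theorem deriv_interpolation_taylor_remainder (k m : ℕ) (hm : 1 ≤ m) (hmk : m ≤ k) :
    ∃ C : ℝ, 0 < C ∧ ∀ (a b : ℝ), a < b → ∀ f : ℝ → ℝ,
      ContDiffOn ℝ (↑(k - 1) : ℕ∞) f (Set.Icc a b) →
      ∀ M K : ℝ, 0 ≤ M → 0 ≤ K →
      LipschitzOnWith (Real.toNNReal K)
        (iteratedDerivWithin (k - 1) f (Set.Icc a b)) (Set.Icc a b) →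
      (∀ t₁ ∈ Set.Icc a b, ∀ t₂ ∈ Set.Icc a b,
        |f t₁ - ∑ j ∈ Finset.range m,
            (t₁ - t₂) ^ j / (Nat.factorial j : ℝ) *
              iteratedDerivWithin j f (Set.Icc a b) t₂| ≤ M) →
      ∀ z ∈ Set.Icc a b,
        |iteratedDerivWithin m f (Set.Icc a b) z| ≤
          C * (M / (b - a) ^ m +
            M ^ (1 - (m : ℝ) / k) * K ^ ((m : ℝ) / k)) := by
  obtain ⟨C, hC1, hC⟩ := exists_isLandauKolmogorovConstant (k - 1)
  refine ⟨2 * C ^ (m + 1), by positivity, ?_⟩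
  intro a b hab f hf M K hM hK hlip htaylor z hz
  set X := |iteratedDerivWithin m f (Icc a b) z|
  set Q := M ^ (1 - (m : ℝ) / k) * K ^ ((m : ℝ) / k)
  have hP : 0 ≤ M / (b - a) ^ m := by have := sub_pos.2 hab; positivity
  have hQ : 0 ≤ C * Q := by positivity
  rcases hmk.lt_or_eq with hmk | rfl
  · have hX : X / C ≤ 2 * (M / ((b - a) / C) ^ m + Q) := by
      refine le_two_mul_of_forall_le_div_pow_add_mul_pow hmk hM hK (by positivity)
        fun h hh hhC => ?_
      rw [div_le_iff₀' (by positivity), ← Real.coe_toNNReal K hK]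
      exact hC.abs_iteratedDerivWithin_le_of_taylor_remainder_le hmk hab hf hlip
        (fun t ht => htaylor t ht a (left_mem_Icc.2 hab.le)) hh
        (by rwa [le_div_iff₀' (by positivity)] at hhC) hz
    rw [div_le_iff₀' (by positivity), div_pow, div_div_eq_mul_div, mul_comm M,
      mul_div_assoc] at hX
    rw [pow_succ]
    nlinarith [mul_le_mul_of_nonneg_right (one_le_pow₀ hC1 : 1 ≤ C ^ m) hQ]
  · obtain ⟨n, rfl⟩ : ∃ n, m = n + 1 := ⟨m - 1, by omega⟩
    have hXK : X ≤ K := by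
      simpa [X, iteratedDerivWithin_succ, Real.coe_toNNReal K hK] using
        hlip.norm_derivWithin_le hz
    rw [show Q = K by simp [Q, div_self (by positivity : (n : ℝ) + 1 ≠ 0)]]
    have hC0 : 0 ≤ C := by linarith
    nlinarith [one_le_pow₀ (n := n + 1 + 1) hC1, mul_nonneg (pow_nonneg hC0 (n + 1 + 1)) hP]
end

section
/- Let f : B(0,a) → [0,∞) be an elliptical flat smooth function on a ball in ℝⁿ (positive away from 0, vanishing to infinite order at 0, smooth). If for every m ≥ 1 and every 0 < s < 1 there is a constant Γ_{m,s} with |∇^m f(x)| ≤ Γ_{m,s} f(x)^s for all x ∈ B(0,a), then for every γ > 0 the power f^γ is a smooth function on B(0,a) that is flat at the origin. -/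
/-!
Away from the origin `f ^ γ` is smooth. Differentiating `f ^ β` as `β f ^ (β - 1) • Df` and applying
the Leibniz rule, induction on `m` gives `|∇^m (f ^ β)| ≤ C f ^ (β - m (1 - s))` where `f ≤ 1`;
taking `s` close to `1` makes the exponent positive, so every derivative of `f ^ γ` of positive
order tends to `0` at the origin. By the mean value inequality, a function continuous at a point
whose derivative tends to `0` there is differentiable there with derivative `0`; iterating this
extends smoothness of `f ^ γ` across the origin. Flatness follows from
`f ^ γ / |x| ^ N ≤ (f / |x| ^ M) ^ γ` for `N ≤ M γ` and `|x| ≤ 1`.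
-/
open Metric Filter Topology Set
open scoped ContDiff

section RemovableSingularity

variable {E F : Type*} [NormedAddCommGroup E] [NormedSpace ℝ E] [NormedAddCommGroup F]
  [NormedSpace ℝ F] {g : E → F} {x₀ : E}

theorem norm_sub_le_of_norm_fderiv_le_punctured_ball {ε c : ℝ} (hc : ContinuousAt g x₀)
    (hd : ∀ y ∈ ball x₀ ε, y ≠ x₀ → DifferentiableAt ℝ g y ∧ ‖fderiv ℝ g y‖ ≤ c)
    {x : E} (hx : x ∈ ball x₀ ε) : ‖g x - g x₀‖ ≤ c * ‖x - x₀‖ := by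
  rcases eq_or_ne x x₀ with rfl | hne
  · simp
  set p : ℝ → E := fun r => x + r • (x₀ - x)
  have hp_mem : ∀ r ∈ Icc (0 : ℝ) 1, p r ∈ ball x₀ ε := fun r hr =>
    (convex_ball x₀ ε).add_smul_sub_mem hx (mem_ball_self (pos_of_mem_ball hx)) hr
  have hp_ne : ∀ r < 1, p r ≠ x₀ := by
    intro r hr h
    have : (1 - r) • (x - x₀) = 0 := by
      rw [← sub_eq_zero.2 h]; simp only [p]; module
    exact hne (sub_eq_zero.1 ((smul_eq_zero.1 this).resolve_left (by linarith)))
  have hderiv : ∀ r ∈ Ico (0 : ℝ) 1,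
      HasDerivAt (g ∘ p) (fderiv ℝ g (p r) (x₀ - x)) r := by
    intro r hr
    have hp : HasDerivAt p (x₀ - x) r := by
      simpa only [one_smul] using ((hasDerivAt_id' r).smul_const (x₀ - x)).const_add x
    exact (hd _ (hp_mem r (Ico_subset_Icc_self hr)) (hp_ne r hr.2)).1.hasFDerivAt.comp_hasDerivAt r
      hp
  have hcont : ContinuousOn (g ∘ p) (Icc 0 1) := by
    intro r hr
    rcases hr.2.lt_or_eq with hr1 | rfl
    · exact (hderiv r ⟨hr.1, hr1⟩).continuousAt.continuousWithinAt
    · have hp1 : p 1 = x₀ := by simp [p]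
      have hpc : ContinuousAt p 1 := by fun_prop
      exact (ContinuousAt.comp (hp1 ▸ hc) hpc).continuousWithinAt
  have hbound : ∀ r ∈ Ico (0 : ℝ) 1, ‖fderiv ℝ g (p r) (x₀ - x)‖ ≤ c * ‖x - x₀‖ := by
    intro r hr
    rw [norm_sub_rev x]
    exact ((fderiv ℝ g (p r)).le_opNorm _).trans (mul_le_mul_of_nonneg_right
      (hd _ (hp_mem r (Ico_subset_Icc_self hr)) (hp_ne r hr.2)).2 (norm_nonneg _))
  simpa [p, norm_sub_rev] using norm_image_sub_le_of_norm_deriv_right_le_segment hcont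
    (fun r hr => (hderiv r hr).hasDerivWithinAt) hbound 1 (right_mem_Icc.2 zero_le_one)

theorem hasFDerivAt_zero_of_tendsto_fderiv (hc : ContinuousAt g x₀)
    (hd : ∀ᶠ x in 𝓝[≠] x₀, DifferentiableAt ℝ g x)
    (ht : Tendsto (fderiv ℝ g) (𝓝[≠] x₀) (𝓝 0)) : HasFDerivAt g (0 : E →L[ℝ] F) x₀ := by
  rw [hasFDerivAt_iff_isLittleO, Asymptotics.isLittleO_iff]
  intro c hc0
  have hev : ∀ᶠ y in 𝓝[≠] x₀, DifferentiableAt ℝ g y ∧ ‖fderiv ℝ g y‖ ≤ c :=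
    hd.and ((tendsto_zero_iff_norm_tendsto_zero.1 ht).eventually_le_const hc0)
  obtain ⟨ε, hε, hball⟩ := Metric.mem_nhdsWithin_iff.1 hev
  filter_upwards [ball_mem_nhds x₀ hε] with x hx
  simpa using norm_sub_le_of_norm_fderiv_le_punctured_ball hc
    (fun y hy hne => hball ⟨hy, hne⟩) hx

end RemovableSingularity

section SmoothExtension

universe u

-- A single universe, so that the induction can replace `F` by `E →L[ℝ] F`.
variable {E F : Type u} [NormedAddCommGroup E] [NormedSpace ℝ E] [NormedAddCommGroup F]
  [NormedSpace ℝ F]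

theorem contDiffOn_of_contDiffOn_diff_singleton_of_tendsto {g : E → F} {U : Set E} {x₀ : E}
    (hU : IsOpen U) (hc : ContinuousOn g U) (hsm : ContDiffOn ℝ ∞ g (U \ {x₀}))
    (ht : ∀ k : ℕ, Tendsto (fun x => ‖iteratedFDeriv ℝ (k + 1) g x‖) (𝓝[≠] x₀) (𝓝 0)) :
    ContDiffOn ℝ ∞ g U := by
  refine contDiffOn_infty.2 fun m => ?_
  induction m generalizing F g with
  | zero => exact contDiffOn_zero.2 hc
  | succ m ih =>
    have hUo : IsOpen (U \ {x₀}) := hU.sdiff isClosed_singleton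
    have hdiff : ∀ x ∈ U \ {x₀}, DifferentiableAt ℝ g x := fun x hx =>
      (hsm.contDiffAt (hUo.mem_nhds hx)).differentiableAt (by simp)
    have ht' : Tendsto (fderiv ℝ g) (𝓝[≠] x₀) (𝓝 0) := by
      simpa [tendsto_zero_iff_norm_tendsto_zero, ← norm_iteratedFDeriv_fderiv] using ht 0
    have hderiv₀ (h₀ : x₀ ∈ U) : HasFDerivAt g 0 x₀ :=
      hasFDerivAt_zero_of_tendsto_fderiv (hc.continuousAt (hU.mem_nhds h₀))
        (eventually_of_mem (sdiff_mem_nhdsWithin_compl (hU.mem_nhds h₀) _) hdiff) ht'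
    rw [Nat.cast_succ, contDiffOn_succ_iff_fderiv_of_isOpen hU]
    refine ⟨fun x hx => ?_, by simp, ih (fun x hx => ?_)
      ((contDiffOn_infty_iff_fderiv_of_isOpen hUo).1 hsm).2
      fun k => by simpa only [norm_iteratedFDeriv_fderiv] using ht (k + 1)⟩
    · rcases eq_or_ne x x₀ with rfl | hne
      · exact (hderiv₀ hx).differentiableAt.differentiableWithinAt
      · exact (hdiff x ⟨hx, hne⟩).differentiableWithinAt
    · rcases eq_or_ne x x₀ with rfl | hne
      · refine (continuousWithinAt_compl_self.1 ?_).continuousWithinAt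
        rwa [ContinuousWithinAt, (hderiv₀ hx).fderiv]
      · exact ((hsm.continuousOn_fderiv_of_isOpen hUo (by simp)).continuousAt
          (hUo.mem_nhds ⟨hx, hne⟩)).continuousWithinAt

end SmoothExtension

section RpowDerivatives

open Asymptotics Finset

variable {E : Type*} [NormedAddCommGroup E] [NormedSpace ℝ E] {f : E → ℝ} {V : Set E}

theorem norm_iteratedFDeriv_succ_rpow_le (hV : IsOpen V) (hf : ContDiffOn ℝ ∞ f V)
    (hne : ∀ x ∈ V, f x ≠ 0) (β : ℝ) (m : ℕ) {x : E} (hx : x ∈ V) :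
    ‖iteratedFDeriv ℝ (m + 1) (fun y => f y ^ β) x‖ ≤
      |β| * ∑ i ∈ range (m + 1), (m.choose i : ℝ) *
        ‖iteratedFDeriv ℝ i (fun y => f y ^ (β - 1)) x‖ * ‖iteratedFDeriv ℝ (m - i + 1) f x‖ := by
  have hrpow : ContDiffOn ℝ ∞ (fun y => f y ^ (β - 1)) V := hf.rpow_const_of_ne hne
  have hdf : ContDiffOn ℝ ∞ (fderiv ℝ f) V := ((contDiffOn_infty_iff_fderiv_of_isOpen hV).1 hf).2
  have heq : fderiv ℝ (fun y => f y ^ β) =ᶠ[𝓝 x]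
      fun y => β • (f y ^ (β - 1) • fderiv ℝ f y) := by
    filter_upwards [hV.mem_nhds hx] with y hy
    have hfy : DifferentiableAt ℝ f y := (hf.contDiffAt (hV.mem_nhds hy)).differentiableAt (by simp)
    rw [(hfy.hasFDerivAt.rpow_const (Or.inl (hne y hy))).fderiv, mul_smul]
  have hsmooth : ContDiffAt ℝ m (fun y => f y ^ (β - 1) • fderiv ℝ f y) x :=
    ((hrpow.smul hdf).contDiffAt (hV.mem_nhds hx)).of_le (by exact_mod_cast le_top)
  have hleibniz := norm_iteratedFDerivWithin_smul_le hrpow hdf hV.uniqueDiffOn hx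
    (n := m) (by exact_mod_cast le_top)
  simp only [iteratedFDerivWithin_of_isOpen _ hV hx, norm_iteratedFDeriv_fderiv] at hleibniz
  rw [← norm_iteratedFDeriv_fderiv, (heq.iteratedFDeriv ℝ m).eq_of_nhds,
    iteratedFDeriv_const_smul_apply' hsmooth, norm_smul, Real.norm_eq_abs]
  gcongr

theorem isBigO_norm_iteratedFDeriv_rpow (hV : IsOpen V) (hf : ContDiffOn ℝ ∞ f V)
    (hpos : ∀ x ∈ V, 0 < f x) (hle : ∀ x ∈ V, f x ≤ 1) {s : ℝ} (hs : s ≤ 1)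
    (hder : ∀ k : ℕ, (fun x => ‖iteratedFDeriv ℝ (k + 1) f x‖) =O[𝓟 V] fun x => f x ^ s)
    (m : ℕ) (β : ℝ) :
    (fun x => ‖iteratedFDeriv ℝ m (fun y => f y ^ β) x‖) =O[𝓟 V]
      fun x => f x ^ (β - m * (1 - s)) := by
  induction m using Nat.strong_induction_on generalizing β with
  | _ m ih =>
  rcases m with _ | m
  · exact IsBigO.of_bound' (eventually_principal.2 fun x hx => by simp)
  have hterm : ∀ i ∈ range (m + 1), (fun x => (m.choose i : ℝ) *
      ‖iteratedFDeriv ℝ i (fun y => f y ^ (β - 1)) x‖ * ‖iteratedFDeriv ℝ (m - i + 1) f x‖)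
      =O[𝓟 V] fun x => f x ^ (β - ↑(m + 1) * (1 - s)) := by
    intro i hi
    have him : i ≤ m := Nat.lt_succ_iff.1 (mem_range.1 hi)
    have hexp : (fun x => f x ^ (β - 1 - i * (1 - s)) * f x ^ s) =O[𝓟 V]
        fun x => f x ^ (β - ↑(m + 1) * (1 - s)) := by
      refine IsBigO.of_bound' (eventually_principal.2 fun x hx => ?_)
      rw [← Real.rpow_add (hpos x hx), Real.norm_of_nonneg (Real.rpow_nonneg (hpos x hx).le _),
        Real.norm_of_nonneg (Real.rpow_nonneg (hpos x hx).le _)]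
      refine Real.rpow_le_rpow_of_exponent_ge (hpos x hx) (hle x hx) ?_
      have : (i : ℝ) ≤ m := by exact_mod_cast him
      push_cast
      nlinarith
    simp_rw [mul_assoc]
    exact (((ih i (by omega) (β - 1)).mul (hder (m - i))).trans hexp).const_mul_left _
  refine (IsBigO.of_bound' (eventually_principal.2 fun x hx => ?_)).trans
    ((IsBigO.fun_sum hterm).const_mul_left |β|)
  rw [norm_norm]
  exact (norm_iteratedFDeriv_succ_rpow_le hV hf (fun x hx => (hpos x hx).ne') β m hx).trans
    (Real.le_norm_self _)

theorem tendsto_norm_iteratedFDeriv_rpow {l : Filter E} {U : Set E} (hU : IsOpen U)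
    (hf : ContDiffOn ℝ ∞ f U) (hpos : ∀ x ∈ U, 0 < f x) (hUl : U ∈ l)
    (hlim : Tendsto f l (𝓝 0))
    (hder : ∀ k : ℕ, ∀ s : ℝ, 0 < s → s < 1 →
      (fun x => ‖iteratedFDeriv ℝ (k + 1) f x‖) =O[𝓟 U] fun x => f x ^ s)
    {γ : ℝ} (hγ : 0 < γ) (k : ℕ) :
    Tendsto (fun x => ‖iteratedFDeriv ℝ (k + 1) (fun y => f y ^ γ) x‖) l (𝓝 0) := by
  obtain ⟨t, ht0, ht⟩ : ∃ t : ℝ, 0 < t ∧ t < min 1 (γ / (k + 1)) :=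
    exists_between (by positivity)
  rw [lt_min_iff, lt_div_iff₀ (by positivity)] at ht
  -- With `s = 1 - t` the exponent `γ - (k + 1) * (1 - s)` is positive.
  set V := U ∩ f ⁻¹' Iio 1
  have hVU : V ⊆ U := inter_subset_left
  have hV : IsOpen V := hf.continuousOn.isOpen_inter_preimage hU isOpen_Iio
  have hVl : V ∈ l := inter_mem hUl (hlim (Iio_mem_nhds one_pos))
  have hO := isBigO_norm_iteratedFDeriv_rpow hV (hf.mono hVU) (fun x hx => hpos x hx.1)
    (fun x hx => le_of_lt hx.2) (s := 1 - t) (by linarith)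
    (fun j => (hder j (1 - t) (by linarith) (by linarith)).mono (principal_mono.2 hVU)) (k + 1) γ
  have hexp : 0 < γ - ↑(k + 1) * (1 - (1 - t)) := by push_cast; linarith
  refine (hO.mono (le_principal_iff.2 hVl)).trans_tendsto ?_
  have hpow := (Real.continuousAt_rpow_const 0 _ (Or.inr hexp.le)).tendsto.comp hlim
  rwa [Real.zero_rpow hexp.ne'] at hpow

end RpowDerivatives

section Flatness

variable {E : Type*} [NormedAddCommGroup E] {f : E → ℝ}

def IsFlatAtZero (f : E → ℝ) : Prop :=
  ∀ N : ℕ, Tendsto (fun x => f x / ‖x‖ ^ N) (𝓝[≠] 0) (𝓝 0)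

theorem IsFlatAtZero.tendsto (hf : IsFlatAtZero f) : Tendsto f (𝓝[≠] 0) (𝓝 0) := by
  simpa using hf 0

theorem IsFlatAtZero.rpow (hf : IsFlatAtZero f) (hf0 : ∀ᶠ x in 𝓝[≠] 0, 0 ≤ f x) {γ : ℝ}
    (hγ : 0 < γ) : IsFlatAtZero fun x => f x ^ γ := by
  intro N
  obtain ⟨M, hM⟩ : ∃ M : ℕ, (N : ℝ) ≤ M * γ := by
    obtain ⟨M, hM⟩ := exists_nat_ge ((N : ℝ) / γ)
    exact ⟨M, (div_le_iff₀ hγ).1 hM⟩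
  have hlim : Tendsto (fun x => (f x / ‖x‖ ^ M) ^ γ) (𝓝[≠] 0) (𝓝 0) := by
    simpa [Function.comp_def, Real.zero_rpow hγ.ne'] using
      (Real.continuousAt_rpow_const 0 γ (Or.inr hγ.le)).tendsto.comp (hf M)
  have hsmall : ∀ᶠ x in 𝓝[≠] (0 : E), ‖x‖ ≤ 1 :=
    nhdsWithin_le_nhds (mem_of_superset (closedBall_mem_nhds 0 one_pos)
      fun x hx => mem_closedBall_zero_iff.1 hx)
  refine squeeze_zero' ?_ ?_ hlim
  · filter_upwards [hf0] with x hx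
    exact div_nonneg (Real.rpow_nonneg hx γ) (pow_nonneg (norm_nonneg x) N)
  · filter_upwards [hf0, hsmall, self_mem_nhdsWithin] with x hx hx1 (hx0 : x ≠ 0)
    have hxpos : 0 < ‖x‖ := norm_pos_iff.2 hx0
    rw [Real.div_rpow hx (by positivity), ← Real.rpow_natCast ‖x‖ M, ← Real.rpow_mul hxpos.le,
      ← Real.rpow_natCast ‖x‖ N]
    exact div_le_div_of_nonneg_left (Real.rpow_nonneg hx γ) (Real.rpow_pos_of_pos hxpos _)
      (Real.rpow_le_rpow_of_exponent_ge hxpos hx1 hM)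

end Flatness

theorem powers_smooth_of_derivative_bounds_general (n : ℕ) (a : ℝ) (ha : 0 < a)
    (f : EuclideanSpace ℝ (Fin n) → ℝ)
    (hell : ∀ x ∈ ball (0 : EuclideanSpace ℝ (Fin n)) a, x ≠ 0 → 0 < f x)
    (hsm : ContDiffOn ℝ (⊤ : ℕ∞) f (ball 0 a))
    (hflat : ∀ N : ℕ,
      Tendsto (fun x => f x / ‖x‖ ^ N)
        (𝓝[ball (0 : EuclideanSpace ℝ (Fin n)) a \ {0}] 0) (𝓝 0))
    (hder : ∀ m : ℕ, 1 ≤ m → ∀ s : ℝ, 0 < s → s < 1 → ∃ Γ : ℝ,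
      ∀ x ∈ ball (0 : EuclideanSpace ℝ (Fin n)) a,
        ‖iteratedFDerivWithin ℝ m f (ball 0 a) x‖ ≤ Γ * f x ^ s) :
    ∀ γ : ℝ, 0 < γ →
      ContDiffOn ℝ (⊤ : ℕ∞) (fun x => f x ^ γ) (ball 0 a) ∧
      ∀ N : ℕ,
        Tendsto (fun x => f x ^ γ / ‖x‖ ^ N)
          (𝓝[ball (0 : EuclideanSpace ℝ (Fin n)) a \ {0}] 0) (𝓝 0) := by
  intro γ hγ
  set U := ball (0 : EuclideanSpace ℝ (Fin n)) a \ {0}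
  have hfilter : 𝓝[U] 0 = 𝓝[≠] 0 :=
    nhdsWithin_inter_of_mem (mem_nhdsWithin_of_mem_nhds (ball_mem_nhds 0 ha))
  have hUl : U ∈ 𝓝[≠] 0 := hfilter ▸ self_mem_nhdsWithin
  rw [hfilter] at hflat ⊢
  have hpos : ∀ x ∈ U, 0 < f x := fun x hx => hell x hx.1 hx.2
  have hder' : ∀ k : ℕ, ∀ s : ℝ, 0 < s → s < 1 →
      (fun x => ‖iteratedFDeriv ℝ (k + 1) f x‖) =O[𝓟 U] fun x => f x ^ s := by
    intro k s hs0 hs1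
    obtain ⟨Γ, hΓ⟩ := hder (k + 1) (Nat.le_add_left 1 k) s hs0 hs1
    refine Asymptotics.IsBigO.of_bound Γ (eventually_principal.2 fun x hx => ?_)
    rw [norm_norm, Real.norm_of_nonneg (Real.rpow_nonneg (hpos x hx).le s),
      ← iteratedFDerivWithin_of_isOpen _ isOpen_ball hx.1]
    exact hΓ x hx.1
  refine ⟨contDiffOn_of_contDiffOn_diff_singleton_of_tendsto isOpen_ball
    (hsm.continuousOn.rpow_const fun x _ => Or.inr hγ.le)
    ((hsm.mono sdiff_subset).rpow_const_of_ne fun x hx => (hpos x hx).ne')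
    (tendsto_norm_iteratedFDeriv_rpow (isOpen_ball.sdiff isClosed_singleton)
      (hsm.mono sdiff_subset) hpos hUl (IsFlatAtZero.tendsto hflat) hder' hγ),
    IsFlatAtZero.rpow hflat (eventually_of_mem hUl fun x hx => (hpos x hx).le) hγ⟩

/-- If `f` is an elliptical flat smooth nonnegative function on a ball `B(0,a) ⊆ ℝⁿ`
satisfying the derivative estimates `|∇^m f(x)| ≤ Γ_{m,s} f(x)^s` for all `m ≥ 1` and
all `0 < s < 1`, then for every `γ > 0` the power `f^γ` is smooth on the ball and flat
at the origin. -/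
theorem powers_smooth_of_derivative_bounds (n : ℕ) (a : ℝ) (ha : 0 < a)
    (f : EuclideanSpace ℝ (Fin n) → ℝ)
    (hf0 : ∀ x ∈ ball (0 : EuclideanSpace ℝ (Fin n)) a, 0 ≤ f x)
    (hell : ∀ x ∈ ball (0 : EuclideanSpace ℝ (Fin n)) a, x ≠ 0 → 0 < f x)
    (hsm : ContDiffOn ℝ (⊤ : ℕ∞) f (ball 0 a))
    (hflat : ∀ N : ℕ,
      Tendsto (fun x => f x / ‖x‖ ^ N)
        (𝓝[ball (0 : EuclideanSpace ℝ (Fin n)) a \ {0}] 0) (𝓝 0))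
    (hder : ∀ m : ℕ, 1 ≤ m → ∀ s : ℝ, 0 < s → s < 1 → ∃ Γ : ℝ,
      ∀ x ∈ ball (0 : EuclideanSpace ℝ (Fin n)) a,
        ‖iteratedFDerivWithin ℝ m f (ball 0 a) x‖ ≤ Γ * f x ^ s) :
    ∀ γ : ℝ, 0 < γ →
      ContDiffOn ℝ (⊤ : ℕ∞) (fun x => f x ^ γ) (ball 0 a) ∧
      ∀ N : ℕ,
        Tendsto (fun x => f x ^ γ / ‖x‖ ^ N)
          (𝓝[ball (0 : EuclideanSpace ℝ (Fin n)) a \ {0}] 0) (𝓝 0) :=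
  powers_smooth_of_derivative_bounds_general n a ha f hell hsm hflat hder
end

section
/- Suppose f : (0,a) → (0,∞) satisfies f(t) ≤ C_s f(x)^s for all 0 ≤ t < x < a and some s ≥ 1/2, and f(x) = exp(−1/g(x)) for a positive function g. Then g(t) ≤ g(x)/(s − (ln C_s) g(x)) for all 0 ≤ t < x < a; in particular, if g(x) < s/(2 ln C_s), then g(t) ≤ (2/s) g(x) ≤ 4 g(x). -/
/-- Key deduction: if `f = exp(-1/g)` with `g` positive satisfies the `ω_s`-monotonicity
inequality `f(t) ≤ C f(x)^s` for all `0 ≤ t < x < a` with `s ≥ 1/2` and `C > 1`, then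
`g(t) ≤ g(x)/(s − (ln C) g(x))` (whenever the denominator is positive); in particular,
if `g(x) < s/(2 ln C)` then `g(t) ≤ (2/s) g(x) ≤ 4 g(x)`. -/
theorem monotonicity_of_g_from_exp (a s C : ℝ) (ha : 0 < a) (hs : 1 / 2 ≤ s)
    (hC : 1 < C) (g : ℝ → ℝ)
    (hg : ∀ x : ℝ, 0 ≤ x → x < a → 0 < g x)
    (hmon : ∀ t x : ℝ, 0 ≤ t → t < x → x < a →
      Real.exp (-(g t)⁻¹) ≤ C * Real.exp (-(g x)⁻¹) ^ s) :
    ∀ t x : ℝ, 0 ≤ t → t < x → x < a →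
      (0 < s - Real.log C * g x → g t ≤ g x / (s - Real.log C * g x)) ∧
      (g x < s / (2 * Real.log C) →
        g t ≤ (2 / s) * g x ∧ (2 / s) * g x ≤ 4 * g x) := by
  intro t x ht htx hxa
  have hgt := hg t ht (htx.trans hxa)
  have hgx := hg x (ht.trans htx.le) hxa
  have hlogC : 0 < Real.log C := Real.log_pos hC
  have hkey : s * (g x)⁻¹ - Real.log C ≤ (g t)⁻¹ := by
    have h := hmon t x ht htx hxa
    rw [Real.rpow_def_of_pos (Real.exp_pos _), Real.log_exp] at h
    rw [← Real.exp_log (lt_trans one_pos hC), ← Real.exp_add, Real.exp_le_exp] at h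
    nlinarith
  have main : 0 < s - Real.log C * g x → g t ≤ g x / (s - Real.log C * g x) := by
    intro hd
    rw [le_div_iff₀ hd]
    have h2 : (s - Real.log C * g x) * (g x)⁻¹ ≤ (g t)⁻¹ := by
      have heq : (s - Real.log C * g x) * (g x)⁻¹ = s * (g x)⁻¹ - Real.log C := by
        field_simp
      linarith [hkey]
    have h3 : g t * ((s - Real.log C * g x) * (g x)⁻¹) ≤ g t * (g t)⁻¹ :=
      mul_le_mul_of_nonneg_left h2 hgt.le
    rw [mul_inv_cancel₀ (ne_of_gt hgt)] at h3
    calc g t * (s - Real.log C * g x)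
        = (g t * ((s - Real.log C * g x) * (g x)⁻¹)) * g x := by field_simp
      _ ≤ 1 * g x := mul_le_mul_of_nonneg_right h3 hgx.le
      _ = g x := one_mul _
  refine ⟨main, fun hsmall => ?_⟩
  have hsd : s / 2 ≤ s - Real.log C * g x := by
    rw [lt_div_iff₀ (by positivity)] at hsmall
    nlinarith
  have hdpos : 0 < s - Real.log C * g x := lt_of_lt_of_le (by linarith) hsd
  refine ⟨?_, ?_⟩
  · calc g t ≤ g x / (s - Real.log C * g x) := main hdpos
      _ ≤ g x / (s / 2) := by
          apply div_le_div_of_nonneg_left hgx.le (by linarith) hsd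
      _ = (2 / s) * g x := by field_simp
  · have h4 : 2 / s ≤ 4 := by rw [div_le_iff₀ (by linarith)]; linarith
    nlinarith
end

section
/- Let γ > 0 and let f : B(0,a) → [0,∞) be smooth with f > 0 away from 0. Suppose for integers 0 ≤ k ≤ M the bounds |∇^k f(x)| ≤ Γ_k f(x)^{1−kε} hold on B(0,a) for some ε with 0 < ε < γ/M. Then g = f^γ (extended by g(0)=0) satisfies |∇^M g(x)| ≤ C f(x)^{γ − Mε} on B(0,a) \ {0}; in particular ∇^M g extends continuously to 0 with value 0. -/
/-!
Since `f ^ δ` has derivative `δ f ^ (δ - 1) • f'`, the Leibniz rule writes the `(j + 1)`-st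
derivative of `f ^ δ` as a sum of products of the `i`-th derivatives of `f ^ (δ - 1)` and the
`(j - i + 1)`-st derivatives of `f`, `i ≤ j`. By strong induction on the order, simultaneously
for all exponents `δ`, each product is `O(f ^ (δ - 1 - iε) f ^ (1 - (j - i + 1)ε))`, i.e.
`O(f ^ (δ - (j + 1)ε))`; this replaces the full Faà di Bruno expansion. For `δ = γ` and order
`M` the exponent `γ - Mε` is positive, so the bound tends to `0` together with `f`.
-/

open Metric Filter Topology Asymptotics Set

section
variable {𝕜 E F G : Type*} [NontriviallyNormedField 𝕜] [NormedAddCommGroup E] [NormedSpace 𝕜 E]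
  [NormedAddCommGroup F] [NormedSpace 𝕜 F] [Norm G] {s : Set E}

theorem isBigO_iteratedFDerivWithin_succ_iff (hs : UniqueDiffOn 𝕜 s) {g : E → F} {w : E → G}
    {n : ℕ} :
    iteratedFDerivWithin 𝕜 (n + 1) g s =O[𝓟 s] w ↔
      iteratedFDerivWithin 𝕜 n (fderivWithin 𝕜 g s) s =O[𝓟 s] w := by
  rw [← isBigO_norm_left, ← isBigO_norm_left (f' := iteratedFDerivWithin 𝕜 n _ s)]
  exact isBigO_congr (fun x hx => (norm_iteratedFDerivWithin_fderivWithin hs hx).symm) .rfl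

theorem isBigO_iteratedFDerivWithin_const_smul (hs : UniqueDiffOn 𝕜 s) {g : E → F} {w : E → G}
    {n : ℕ} (hg : ContDiffOn 𝕜 n g s) (hgw : iteratedFDerivWithin 𝕜 n g s =O[𝓟 s] w) (c : 𝕜) :
    iteratedFDerivWithin 𝕜 n (c • g) s =O[𝓟 s] w :=
  (hgw.const_smul_left c).congr' (fun x hx =>
    (iteratedFDerivWithin_const_smul_apply (hg x hx) hs hx).symm) .rfl

theorem isBigO_iteratedFDerivWithin_smul (hs : UniqueDiffOn 𝕜 s) {c : E → 𝕜} {g : E → F}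
    {n : ℕ} (hc : ContDiffOn 𝕜 n c s) (hg : ContDiffOn 𝕜 n g s) {u v : ℕ → E → ℝ} {w : E → ℝ}
    (hcu : ∀ i ≤ n, iteratedFDerivWithin 𝕜 i c s =O[𝓟 s] u i)
    (hgv : ∀ i ≤ n, iteratedFDerivWithin 𝕜 i g s =O[𝓟 s] v i)
    (huv : ∀ i ≤ n, ∀ x ∈ s, u i x * v (n - i) x = w x) :
    iteratedFDerivWithin 𝕜 n (fun y => c y • g y) s =O[𝓟 s] w := by
  have hleib : iteratedFDerivWithin 𝕜 n (fun y => c y • g y) s =O[𝓟 s] fun x =>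
      ∑ i ∈ Finset.range (n + 1), (n.choose i : ℝ) * ‖iteratedFDerivWithin 𝕜 i c s x‖ *
        ‖iteratedFDerivWithin 𝕜 (n - i) g s x‖ :=
    .of_bound 1 <| eventually_principal.2 fun x hx => by
      rw [one_mul]
      exact (norm_iteratedFDerivWithin_smul_le hc hg hs hx le_rfl).trans (Real.le_norm_self _)
  refine hleib.trans (IsBigO.fun_sum fun i hi => ?_)
  have hin : i ≤ n := Nat.lt_succ_iff.1 (Finset.mem_range.1 hi)
  simp_rw [mul_assoc]
  exact (((hcu i hin).norm_left.mul (hgv (n - i) (n.sub_le i)).norm_left).const_mul_left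
    _).trans_eventuallyEq fun x hx => huv i hin x hx
end

section
variable {E : Type*} [NormedAddCommGroup E] [NormedSpace ℝ E] {f : E → ℝ} {s : Set E}

theorem fderivWithin_rpow_const_eqOn (hs : UniqueDiffOn ℝ s) (hf : DifferentiableOn ℝ f s)
    (hf0 : ∀ x ∈ s, f x ≠ 0) (p : ℝ) :
    EqOn (fderivWithin ℝ (fun y => f y ^ p) s)
      (fun y => (p • fun z => f z ^ (p - 1)) y • fderivWithin ℝ f s y) s := fun x hx =>
  ((hf x hx).hasFDerivWithinAt.rpow_const (.inl (hf0 x hx))).fderivWithin (hs x hx)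

theorem isBigO_iteratedFDerivWithin_rpow_const {ε : ℝ} {M : ℕ} (hs : UniqueDiffOn ℝ s)
    (hf : ContDiffOn ℝ M f s) (hpos : ∀ x ∈ s, 0 < f x)
    (hder : ∀ k, 1 ≤ k → k ≤ M →
      iteratedFDerivWithin ℝ k f s =O[𝓟 s] fun x => f x ^ (1 - k * ε))
    {k : ℕ} (hk : k ≤ M) (δ : ℝ) :
    iteratedFDerivWithin ℝ k (fun x => f x ^ δ) s =O[𝓟 s] fun x => f x ^ (δ - k * ε) := by
  induction k using Nat.strong_induction_on generalizing δ with
  | _ k IH =>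
  match k with
  | 0 =>
    rw [← isBigO_norm_left]
    simpa only [norm_iteratedFDerivWithin_zero, CharP.cast_eq_zero, zero_mul, sub_zero]
      using (isBigO_refl _ _).norm_left
  | j + 1 =>
    have hf0 : ∀ x ∈ s, f x ≠ 0 := fun x hx => (hpos x hx).ne'
    rw [isBigO_iteratedFDerivWithin_succ_iff hs, isBigO_congr
      (EqOn.eventuallyEq fun x hx => iteratedFDerivWithin_congr (fderivWithin_rpow_const_eqOn hs
        (hf.differentiableOn (by norm_cast; omega)) hf0 δ) hx j) .rfl]
    refine isBigO_iteratedFDerivWithin_smul hs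
      (((hf.rpow_const_of_ne hf0).of_le (by norm_cast; omega)).const_smul δ)
      (hf.fderivWithin hs (by exact_mod_cast hk))
      (u := fun i x => f x ^ (δ - 1 - i * ε)) (v := fun i x => f x ^ (1 - ((i + 1 : ℕ) : ℝ) * ε))
      (fun i hi => isBigO_iteratedFDerivWithin_const_smul hs
        ((hf.rpow_const_of_ne hf0).of_le (by norm_cast; omega))
        (IH i (Nat.lt_succ_of_le hi) (by omega) _) δ)
      (fun i hi => (isBigO_iteratedFDerivWithin_succ_iff hs).1 (hder _ (by omega) (by omega)))
      fun i hi x hx => ?_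
    rw [← Real.rpow_add (hpos x hx)]
    push_cast [Nat.cast_sub hi]
    ring_nf
end

theorem power_deriv_bound_faa_di_bruno_general (n M : ℕ) (a γ ε : ℝ) (ha : 0 < a)
    (hγ : 0 < γ) (hεγ : ε < γ / (M : ℝ))
    (f : EuclideanSpace ℝ (Fin n) → ℝ)
    (hsm : ContDiffOn ℝ (⊤ : ℕ∞) f (ball 0 a))
    (hpos : ∀ x ∈ ball (0 : EuclideanSpace ℝ (Fin n)) a, x ≠ 0 → 0 < f x)
    (h0 : f 0 = 0)
    (Γ : ℕ → ℝ)
    (hder : ∀ k : ℕ, k ≤ M → ∀ x ∈ ball (0 : EuclideanSpace ℝ (Fin n)) a,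
      ‖iteratedFDerivWithin ℝ k f (ball 0 a) x‖ ≤ Γ k * f x ^ (1 - (k : ℝ) * ε)) :
    ∃ C : ℝ,
      (∀ x ∈ ball (0 : EuclideanSpace ℝ (Fin n)) a \ {0},
        ‖iteratedFDerivWithin ℝ M (fun y => f y ^ γ) (ball 0 a \ {0}) x‖ ≤
          C * f x ^ (γ - (M : ℝ) * ε)) ∧
      Tendsto (fun x => iteratedFDerivWithin ℝ M (fun y => f y ^ γ) (ball 0 a \ {0}) x)
        (𝓝[ball (0 : EuclideanSpace ℝ (Fin n)) a \ {0}] 0) (𝓝 0) := by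
  set S := ball (0 : EuclideanSpace ℝ (Fin n)) a \ {0}
  have hSo : IsOpen S := isOpen_ball.sdiff isClosed_singleton
  have hposS : ∀ x ∈ S, 0 < f x := fun x hx => hpos x hx.1 hx.2
  have hderS (k : ℕ) (_ : 1 ≤ k) (hk : k ≤ M) :
      iteratedFDerivWithin ℝ k f S =O[𝓟 S] fun x => f x ^ (1 - k * ε) :=
    isBigO_principal.2 ⟨Γ k, fun x hx => by
      rw [iteratedFDerivWithin_subset sdiff_subset hSo.uniqueDiffOn isOpen_ball.uniqueDiffOn
        (hsm.of_le (by exact_mod_cast le_top)) hx,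
        Real.norm_of_nonneg (Real.rpow_nonneg (hposS x hx).le _)]
      exact hder k hk x hx.1⟩
  have hO := isBigO_iteratedFDerivWithin_rpow_const hSo.uniqueDiffOn
    ((hsm.of_le (by exact_mod_cast le_top)).mono sdiff_subset) hposS hderS le_rfl γ
  have hexp : 0 < γ - M * ε := by
    rcases M.eq_zero_or_pos with rfl | hM
    · simpa using hγ
    · linarith [(lt_div_iff₀' (Nat.cast_pos.2 hM)).1 hεγ]
  have hbound_tendsto : Tendsto (fun x => f x ^ (γ - M * ε)) (𝓝[S] 0) (𝓝 0) := by
    have hf : Tendsto f (𝓝[S] 0) (𝓝 (f 0)) :=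
      ((hsm.continuousOn 0 (mem_ball_self ha)).mono sdiff_subset).tendsto
    simpa only [h0, Real.zero_rpow hexp.ne'] using hf.rpow_const (.inr hexp.le)
  obtain ⟨C, hC⟩ := isBigO_principal.1 hO
  refine ⟨C, fun x hx => ?_, (hO.mono inf_le_right).trans_tendsto hbound_tendsto⟩
  simpa only [Real.norm_of_nonneg (Real.rpow_nonneg (hposS x hx).le _)] using hC x hx

/-- Faà di Bruno power bound: if `f ≥ 0` is smooth on `B(0,a)`, positive away from `0`
with `f(0) = 0` (so that `g = f^γ` is extended by `g(0) = 0`), and the derivative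
bounds `|∇^k f(x)| ≤ Γ_k f(x)^{1−kε}` hold for `0 ≤ k ≤ M` with `0 < ε < γ/M`, then
`|∇^M (f^γ)(x)| ≤ C f(x)^{γ−Mε}` on the punctured ball; in particular `∇^M (f^γ)`
extends continuously to `0` with value `0`. -/
theorem power_deriv_bound_faa_di_bruno (n M : ℕ) (a γ ε : ℝ) (ha : 0 < a)
    (hγ : 0 < γ) (hε0 : 0 < ε) (hεγ : ε < γ / (M : ℝ))
    (f : EuclideanSpace ℝ (Fin n) → ℝ)
    (hsm : ContDiffOn ℝ (⊤ : ℕ∞) f (ball 0 a))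
    (hf0 : ∀ x ∈ ball (0 : EuclideanSpace ℝ (Fin n)) a, 0 ≤ f x)
    (hpos : ∀ x ∈ ball (0 : EuclideanSpace ℝ (Fin n)) a, x ≠ 0 → 0 < f x)
    (h0 : f 0 = 0)
    (Γ : ℕ → ℝ)
    (hder : ∀ k : ℕ, k ≤ M → ∀ x ∈ ball (0 : EuclideanSpace ℝ (Fin n)) a,
      ‖iteratedFDerivWithin ℝ k f (ball 0 a) x‖ ≤ Γ k * f x ^ (1 - (k : ℝ) * ε)) :
    ∃ C : ℝ,
      (∀ x ∈ ball (0 : EuclideanSpace ℝ (Fin n)) a \ {0},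
        ‖iteratedFDerivWithin ℝ M (fun y => f y ^ γ) (ball 0 a \ {0}) x‖ ≤
          C * f x ^ (γ - (M : ℝ) * ε)) ∧
      Tendsto (fun x => iteratedFDerivWithin ℝ M (fun y => f y ^ γ) (ball 0 a \ {0}) x)
        (𝓝[ball (0 : EuclideanSpace ℝ (Fin n)) a \ {0}] 0) (𝓝 0) :=
  power_deriv_bound_faa_di_bruno_general n M a γ ε ha hγ hεγ f hsm hpos h0 Γ hder
end
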